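/- arXiv:1301.5276 — 9 statements merged into one kernel-verified Lean document; each statement's English description precedes it below -/
import Mathlib

section
/- The 5×5 skew-symmetric matrix Ψ_c(z) with entries Ψ_{12}=c₁z₄, Ψ_{13}=c₂z₂, Ψ_{14}=−c₂z₅, Ψ_{15}=−c₁z₃, Ψ_{23}=c₁z₅, Ψ_{24}=c₂z₃, Ψ_{25}=−c₂z₁, Ψ_{34}=c₁z₁, Ψ_{35}=c₂z₄, Ψ_{45}=c₁z₂ (and skew-symmetry) has its five principal 4×4 Pfaffians equal, up to sign, to the quintic-curve equations c₁c₂z₁² − c₁²z₂z₅ + c₂²z₃z₄, c₁c₂z₂² − c₁²z₁z₃ + c₂²z₄z₅, c₁c₂z₃² − c₁²z₂z₄ + c₂²z₁z₅, c₁c₂z₄² − c₁²z₃z₅ + c₂²z₁z₂, c₁c₂z₅² − c₁²z₁z₄ + c₂²z₂z₃. -/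
/-- The Pfaffian of the 4×4 skew-symmetric submatrix of `M` obtained by taking rows and
columns `a < b < c < d`. -/
def pf4 {R : Type*} [CommRing R] (M : Matrix (Fin 5) (Fin 5) R) (a b c d : Fin 5) : R :=
  M a b * M c d - M a c * M b d + M a d * M b c

section PsiMatrix

variable {R : Type*} [CommRing R] (c₁ c₂ z₁ z₂ z₃ z₄ z₅ : R)

def psiMatrix : Matrix (Fin 5) (Fin 5) R :=
  !![0, c₁*z₄, c₂*z₂, -(c₂*z₅), -(c₁*z₃);
     -(c₁*z₄), 0, c₁*z₅, c₂*z₃, -(c₂*z₁);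
     -(c₂*z₂), -(c₁*z₅), 0, c₁*z₁, c₂*z₄;
     c₂*z₅, -(c₂*z₃), -(c₁*z₁), 0, c₁*z₂;
     c₁*z₃, c₂*z₁, -(c₂*z₄), -(c₁*z₂), 0]

/-! With the deleted index `i` counted from `1`, the signed Pfaffians `(-1)^i pf₍ᵢ₎(Ψ)` are
exactly the quintic equations `qᵢ`. -/

theorem pf4_psiMatrix_delete_one :
    pf4 (psiMatrix c₁ c₂ z₁ z₂ z₃ z₄ z₅) 1 2 3 4 = -(c₁*c₂*z₁^2 - c₁^2*z₂*z₅ + c₂^2*z₃*z₄) := by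
  simp only [pf4, psiMatrix, Matrix.of_apply, Matrix.cons_val', Matrix.cons_val,
    Matrix.cons_val_fin_one, Matrix.cons_val_one, Matrix.cons_val_zero]
  ring

theorem pf4_psiMatrix_delete_two :
    pf4 (psiMatrix c₁ c₂ z₁ z₂ z₃ z₄ z₅) 0 2 3 4 = c₁*c₂*z₂^2 - c₁^2*z₁*z₃ + c₂^2*z₄*z₅ := by
  simp only [pf4, psiMatrix, Matrix.of_apply, Matrix.cons_val', Matrix.cons_val,
    Matrix.cons_val_fin_one, Matrix.cons_val_one, Matrix.cons_val_zero]
  ring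

theorem pf4_psiMatrix_delete_three :
    pf4 (psiMatrix c₁ c₂ z₁ z₂ z₃ z₄ z₅) 0 1 3 4 = -(c₁*c₂*z₃^2 - c₁^2*z₂*z₄ + c₂^2*z₁*z₅) := by
  simp only [pf4, psiMatrix, Matrix.of_apply, Matrix.cons_val', Matrix.cons_val,
    Matrix.cons_val_fin_one, Matrix.cons_val_one, Matrix.cons_val_zero]
  ring

theorem pf4_psiMatrix_delete_four :
    pf4 (psiMatrix c₁ c₂ z₁ z₂ z₃ z₄ z₅) 0 1 2 4 = c₁*c₂*z₄^2 - c₁^2*z₃*z₅ + c₂^2*z₁*z₂ := by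
  simp only [pf4, psiMatrix, Matrix.of_apply, Matrix.cons_val', Matrix.cons_val,
    Matrix.cons_val_fin_one, Matrix.cons_val_one, Matrix.cons_val_zero]
  ring

theorem pf4_psiMatrix_delete_five :
    pf4 (psiMatrix c₁ c₂ z₁ z₂ z₃ z₄ z₅) 0 1 2 3 = -(c₁*c₂*z₅^2 - c₁^2*z₁*z₄ + c₂^2*z₂*z₃) := by
  simp only [pf4, psiMatrix, Matrix.of_apply, Matrix.cons_val', Matrix.cons_val,
    Matrix.cons_val_fin_one, Matrix.cons_val_one, Matrix.cons_val_zero]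
  ring

end PsiMatrix

/-- The five principal 4×4 Pfaffians of the matrix `Ψ_c(z)` are, up to sign, the five
equations of the elliptic normal quintic. -/
theorem stmt0 {R : Type*} [CommRing R] (c₁ c₂ z₁ z₂ z₃ z₄ z₅ : R) :
    let Ψ : Matrix (Fin 5) (Fin 5) R :=
      !![0, c₁*z₄, c₂*z₂, -(c₂*z₅), -(c₁*z₃);
         -(c₁*z₄), 0, c₁*z₅, c₂*z₃, -(c₂*z₁);
         -(c₂*z₂), -(c₁*z₅), 0, c₁*z₁, c₂*z₄;
         c₂*z₅, -(c₂*z₃), -(c₁*z₁), 0, c₁*z₂;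
         c₁*z₃, c₂*z₁, -(c₂*z₄), -(c₁*z₂), 0]
    let q₁ := c₁*c₂*z₁^2 - c₁^2*z₂*z₅ + c₂^2*z₃*z₄
    let q₂ := c₁*c₂*z₂^2 - c₁^2*z₁*z₃ + c₂^2*z₄*z₅
    let q₃ := c₁*c₂*z₃^2 - c₁^2*z₂*z₄ + c₂^2*z₁*z₅
    let q₄ := c₁*c₂*z₄^2 - c₁^2*z₃*z₅ + c₂^2*z₁*z₂
    let q₅ := c₁*c₂*z₅^2 - c₁^2*z₁*z₄ + c₂^2*z₂*z₃
    (pf4 Ψ 1 2 3 4 = q₁ ∨ pf4 Ψ 1 2 3 4 = -q₁) ∧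
    (pf4 Ψ 0 2 3 4 = q₂ ∨ pf4 Ψ 0 2 3 4 = -q₂) ∧
    (pf4 Ψ 0 1 3 4 = q₃ ∨ pf4 Ψ 0 1 3 4 = -q₃) ∧
    (pf4 Ψ 0 1 2 4 = q₄ ∨ pf4 Ψ 0 1 2 4 = -q₄) ∧
    (pf4 Ψ 0 1 2 3 = q₅ ∨ pf4 Ψ 0 1 2 3 = -q₅) :=
  ⟨.inr (pf4_psiMatrix_delete_one c₁ c₂ z₁ z₂ z₃ z₄ z₅),
    .inl (pf4_psiMatrix_delete_two c₁ c₂ z₁ z₂ z₃ z₄ z₅),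
    .inr (pf4_psiMatrix_delete_three c₁ c₂ z₁ z₂ z₃ z₄ z₅),
    .inl (pf4_psiMatrix_delete_four c₁ c₂ z₁ z₂ z₃ z₄ z₅),
    .inr (pf4_psiMatrix_delete_five c₁ c₂ z₁ z₂ z₃ z₄ z₅)⟩
end

section
/- The vector v(1,2) = (z₁z₃²z₄ − z₂z₄z₅², z₁²z₄z₅ − z₂²z₃z₄, z₂³z₅ − z₁³z₃) satisfies the identity v(1,2)₁² + v(1,2)₂·v(1,2)₃ ≡ 0 modulo the ideal generated by the 3×3 minors of the matrix BHM(z). -/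
open MvPolynomial

/-- In `K[z₁,…,z₅]`, with `v = v(1,2)` as in the paper, the element `v₁² + v₂·v₃` lies in
the ideal generated by the 3×3 minors of `BHM(z)`. -/
theorem stmt2 {K : Type*} [Field K] :
    let z : Fin 5 → MvPolynomial (Fin 5) K := fun i => X i
    let BHM : Matrix (Fin 3) (Fin 5) (MvPolynomial (Fin 5) K) :=
      !![(z 0)^2, (z 1)^2, (z 2)^2, (z 3)^2, (z 4)^2;
         z 1*z 4, z 0*z 2, z 1*z 3, z 2*z 4, z 0*z 3;
         z 2*z 3, z 3*z 4, z 0*z 4, z 0*z 1, z 1*z 2]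
    let v₁ := z 0*(z 2)^2*z 3 - z 1*z 3*(z 4)^2
    let v₂ := (z 0)^2*z 3*z 4 - (z 1)^2*z 2*z 3
    let v₃ := (z 1)^3*z 4 - (z 0)^3*z 2
    v₁^2 + v₂*v₃ ∈
      Ideal.span {d : MvPolynomial (Fin 5) K |
        ∃ g : Fin 3 → Fin 5, d = (BHM.submatrix id g).det} := by
  intro z BHM v₁ v₂ v₃
  have h_pair : {(BHM.submatrix id ![0, 1, 2]).det, (BHM.submatrix id ![0, 1, 4]).det} ⊆
      {d | ∃ g : Fin 3 → Fin 5, d = (BHM.submatrix id g).det} := by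
    rintro d (rfl | rfl)
    exacts [⟨_, rfl⟩, ⟨_, rfl⟩]
  refine Ideal.span_mono h_pair (Ideal.mem_span_pair.mpr ⟨-(z 0 * z 3), z 1 * z 3, ?_⟩)
  simp [BHM, v₁, v₂, v₃, z, Matrix.det_fin_three]
  ring
end

section
/- If a point z lies on the line z₁ = 0, z₃ + ζz₄ = 0, ζ²z₂ + z₅ = 0 in P⁴, then the vector (−ζ z₂z₃, −ζ² z₃², z₂²) is a left null vector of the matrix BHM(z), and the point [0 : c₂ : −ζ⁴c₁ : ζ³c₁ : −ζ²c₂] with (c₁,c₂) = (−ζz₃, z₂) equals z; hence the map [c₁:c₂] ↦ [0 : c₂ : −ζ⁴c₁ : ζ³c₁ : −ζ²c₂] defines a section of the fibration of the Shioda surface S(5)₁₅ over P¹. -/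
/-!
Writing `c₁ = -ζz₃`, `c₂ = z₂`, the three rows of `BHM(z)` weighted by `(c₁c₂, -c₁², c₂²)` give
exactly the five Pfaffian expressions, and this weight vector is `(−ζz₂z₃, −ζ²z₃², z₂²)`. So both
claims reduce to the vanishing of the Pfaffians at `z`. On the line, `z` is the point
`[0 : c₂ : −ζ⁴c₁ : ζ³c₁ : −ζ²c₂]`, where each Pfaffian is a multiple of `ζ⁵ - 1`.
-/

open Matrix

section

variable {K : Type*} [CommRing K]

/-- The paper's `BHM(z)`, with indices read modulo 5. -/
def bhm (z : Fin 5 → K) : Matrix (Fin 3) (Fin 5) K :=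
  Matrix.of ![fun i => z i ^ 2, fun i => z (i + 1) * z (i + 4), fun i => z (i + 2) * z (i + 3)]

def pfaffian (c₁ c₂ : K) (z : Fin 5 → K) (i : Fin 5) : K :=
  c₁ * c₂ * z i ^ 2 - c₁ ^ 2 * z (i + 1) * z (i + 4) + c₂ ^ 2 * z (i + 2) * z (i + 3)

def sectionPoint (ζ c₁ c₂ : K) : Fin 5 → K :=
  ![0, c₂, -(ζ ^ 4 * c₁), ζ ^ 3 * c₁, -(ζ ^ 2 * c₂)]

theorem vecMul_bhm (c₁ c₂ : K) (z : Fin 5 → K) :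
    vecMul ![c₁ * c₂, -c₁ ^ 2, c₂ ^ 2] (bhm z) = pfaffian c₁ c₂ z := by
  funext i
  simp only [vecMul, dotProduct, Fin.sum_univ_three, bhm, pfaffian, of_apply, cons_val_zero,
    cons_val_one, cons_val]
  ring

theorem pfaffian_sectionPoint {ζ : K} (hζ : ζ ^ 5 = 1) (c₁ c₂ : K) :
    pfaffian c₁ c₂ (sectionPoint ζ c₁ c₂) = 0 := by
  funext i
  fin_cases i <;>
    simp only [pfaffian, sectionPoint, Fin.reduceFinMk, Fin.reduceAdd, cons_val, Pi.zero_apply]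
  · linear_combination -ζ ^ 2 * c₁ ^ 2 * c₂ ^ 2 * hζ
  · linear_combination -(c₁ * c₂ ^ 3) * hζ
  · linear_combination ζ ^ 3 * c₁ ^ 3 * c₂ * hζ
  · ring
  · ring

theorem sectionPoint_eq_of_mem_line {ζ z₁ z₂ z₃ z₄ z₅ : K} (hζ : ζ ^ 5 = 1) (h1 : z₁ = 0)
    (h2 : z₃ + ζ * z₄ = 0) (h3 : ζ ^ 2 * z₂ + z₅ = 0) :
    sectionPoint ζ (-(ζ * z₃)) z₂ = ![z₁, z₂, z₃, z₄, z₅] := by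
  funext i
  fin_cases i <;> simp only [sectionPoint, Fin.reduceFinMk, cons_val]
  · exact h1.symm
  · linear_combination z₃ * hζ
  · linear_combination -ζ ^ 4 * h2 + z₄ * hζ
  · linear_combination -h3

end

theorem stmt5_general {K : Type*} [Field K] (ζ : K)
    (hζ : IsPrimitiveRoot ζ 5) (z₁ z₂ z₃ z₄ z₅ : K)
    (h1 : z₁ = 0) (h2 : z₃ + ζ*z₄ = 0) (h3 : ζ^2*z₂ + z₅ = 0) :
    let BHM : Matrix (Fin 3) (Fin 5) K :=
      !![z₁^2, z₂^2, z₃^2, z₄^2, z₅^2;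
         z₂*z₅, z₁*z₃, z₂*z₄, z₃*z₅, z₁*z₄;
         z₃*z₄, z₄*z₅, z₁*z₅, z₁*z₂, z₂*z₃]
    let c₁ := -(ζ*z₃)
    let c₂ := z₂
    Matrix.vecMul ![-(ζ*z₂*z₃), -(ζ^2*z₃^2), z₂^2] BHM = 0 ∧
    (![(0:K), c₂, -(ζ^4*c₁), ζ^3*c₁, -(ζ^2*c₂)] = ![z₁, z₂, z₃, z₄, z₅]) ∧
    (c₁*c₂*z₁^2 - c₁^2*z₂*z₅ + c₂^2*z₃*z₄ = 0 ∧
     c₁*c₂*z₂^2 - c₁^2*z₃*z₁ + c₂^2*z₄*z₅ = 0 ∧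
     c₁*c₂*z₃^2 - c₁^2*z₄*z₂ + c₂^2*z₅*z₁ = 0 ∧
     c₁*c₂*z₄^2 - c₁^2*z₅*z₃ + c₂^2*z₁*z₂ = 0 ∧
     c₁*c₂*z₅^2 - c₁^2*z₁*z₄ + c₂^2*z₂*z₃ = 0) := by
  intro BHM c₁ c₂
  have hz : sectionPoint ζ c₁ c₂ = ![z₁, z₂, z₃, z₄, z₅] :=
    sectionPoint_eq_of_mem_line hζ.pow_eq_one h1 h2 h3
  have hpf : pfaffian c₁ c₂ ![z₁, z₂, z₃, z₄, z₅] = 0 :=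
    hz ▸ pfaffian_sectionPoint hζ.pow_eq_one c₁ c₂
  have hBHM : BHM = bhm ![z₁, z₂, z₃, z₄, z₅] := by
    ext i j
    fin_cases i <;> fin_cases j <;> first | rfl | exact mul_comm _ _
  have hweights : ![-(ζ*z₂*z₃), -(ζ^2*z₃^2), z₂^2] = ![c₁ * c₂, -c₁ ^ 2, c₂ ^ 2] := by
    ext i
    fin_cases i <;> simp only [Fin.reduceFinMk, cons_val, c₁, c₂] <;> ring
  refine ⟨by rw [hBHM, hweights, vecMul_bhm, hpf], hz, ?_⟩
  exact ⟨congrFun hpf 0, congrFun hpf 1, congrFun hpf 2, congrFun hpf 3, congrFun hpf 4⟩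

/-- On the line `z₁ = 0, z₃ + ζz₄ = 0, ζ²z₂ + z₅ = 0`: (a) the vector
`(−ζz₂z₃, −ζ²z₃², z₂²)` is a left null vector of `BHM(z)`; (b) with
`(c₁,c₂) = (−ζz₃, z₂)` the point `[0 : c₂ : −ζ⁴c₁ : ζ³c₁ : −ζ²c₂]` equals `z` and
satisfies the five Pfaffian equations; hence `[c₁:c₂] ↦ [0 : c₂ : −ζ⁴c₁ : ζ³c₁ : −ζ²c₂]`
is a section of `S(5)₁₅ → P¹`. -/
theorem stmt5 {K : Type*} [Field K] (hchar : (5 : K) ≠ 0) (ζ : K)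
    (hζ : IsPrimitiveRoot ζ 5) (z₁ z₂ z₃ z₄ z₅ : K)
    (h1 : z₁ = 0) (h2 : z₃ + ζ*z₄ = 0) (h3 : ζ^2*z₂ + z₅ = 0) :
    let BHM : Matrix (Fin 3) (Fin 5) K :=
      !![z₁^2, z₂^2, z₃^2, z₄^2, z₅^2;
         z₂*z₅, z₁*z₃, z₂*z₄, z₃*z₅, z₁*z₄;
         z₃*z₄, z₄*z₅, z₁*z₅, z₁*z₂, z₂*z₃]
    let c₁ := -(ζ*z₃)
    let c₂ := z₂
    Matrix.vecMul ![-(ζ*z₂*z₃), -(ζ^2*z₃^2), z₂^2] BHM = 0 ∧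
    (![(0:K), c₂, -(ζ^4*c₁), ζ^3*c₁, -(ζ^2*c₂)] = ![z₁, z₂, z₃, z₄, z₅]) ∧
    (c₁*c₂*z₁^2 - c₁^2*z₂*z₅ + c₂^2*z₃*z₄ = 0 ∧
     c₁*c₂*z₂^2 - c₁^2*z₃*z₁ + c₂^2*z₄*z₅ = 0 ∧
     c₁*c₂*z₃^2 - c₁^2*z₄*z₂ + c₂^2*z₅*z₁ = 0 ∧
     c₁*c₂*z₄^2 - c₁^2*z₅*z₃ + c₂^2*z₁*z₂ = 0 ∧
     c₁*c₂*z₅^2 - c₁^2*z₁*z₄ + c₂^2*z₂*z₃ = 0) :=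
  stmt5_general ζ hζ z₁ z₂ z₃ z₄ z₅ h1 h2 h3
end

section
/- The five polynomials γ₁ = 3c₁c₂c₃c₄, γ₂ = −c₁(c₂³+c₃³+c₄³), γ₃ = c₂(c₁³+c₃³−c₄³), γ₄ = c₃(c₁³−c₂³+c₄³), γ₅ = c₄(c₁³+c₂³−c₃³) satisfy the Burkhardt quartic equation γ₁(γ₁³+γ₂³+γ₃³+γ₄³+γ₅³) + 3γ₂γ₃γ₄γ₅ = 0 identically in c₁,c₂,c₃,c₄. -/
/-- The coefficients of the Coble cubic satisfy the Burkhardt quartic equation. -/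
theorem stmt8 {K : Type*} [CommRing K] (c₁ c₂ c₃ c₄ : K) :
    let γ₁ := 3*c₁*c₂*c₃*c₄
    let γ₂ := -(c₁*(c₂^3+c₃^3+c₄^3))
    let γ₃ := c₂*(c₁^3+c₃^3-c₄^3)
    let γ₄ := c₃*(c₁^3-c₂^3+c₄^3)
    let γ₅ := c₄*(c₁^3+c₂^3-c₃^3)
    γ₁*(γ₁^3 + γ₂^3 + γ₃^3 + γ₄^3 + γ₅^3) + 3*γ₂*γ₃*γ₄*γ₅ = 0 := by
  intros
  ring
end

section
/- The linear span defined by the four equations (c₂³+c₃³+c₄³)z₁ + 3c₂c₃c₄(z₂+z₃) = 0, (−c₁³−c₃³+c₄³)z₁ + 3c₁c₃c₄(z₄+z₇) = 0, (−c₁³−c₂³+c₃³)z₁ + 3c₁c₂c₃(z₆+z₈) = 0, (−c₁³+c₂³−c₄³)z₁ + 3c₁c₂c₄(z₅+z₉) = 0 is contained in the kernel of the 9×9 matrix Φ_c(z_c), where z_c = (0,−c₁,c₁,−c₂,−c₃,−c₄,c₂,c₄,c₃); in particular any vector z satisfying these four linear equations satisfies Φ_c(z_c)·z = 0, assuming c₁c₂c₃c₄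 ≠ 0. -/
/-!
The columns of `Φ_c(z_c)` coincide in pairs (2,3), (4,7), (6,8), (5,9), and so do its rows, so
`Φ_c(z_c) z` only involves five linear forms in `z₁` and the pair sums `z₂+z₃, z₄+z₇, z₆+z₈, z₅+z₉`.
Each of these forms, multiplied by `3c₁c₂c₃c₄ ≠ 0`, is a combination of the four equations.
-/

theorem reducedRows_eq_zero {R : Type*} [CommRing R] [IsDomain R]
    (c₁ c₂ c₃ c₄ a s₁ s₂ s₃ s₄ : R) (h3 : (3 : R) ≠ 0) (hc : c₁*c₂*c₃*c₄ ≠ 0)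
    (L₁ : (c₂^3+c₃^3+c₄^3)*a + 3*c₂*c₃*c₄*s₁ = 0)
    (L₂ : (-c₁^3-c₃^3+c₄^3)*a + 3*c₁*c₃*c₄*s₂ = 0)
    (L₃ : (-c₁^3-c₂^3+c₃^3)*a + 3*c₁*c₂*c₃*s₃ = 0)
    (L₄ : (-c₁^3+c₂^3-c₄^3)*a + 3*c₁*c₂*c₄*s₄ = 0) :
    -c₁^2*s₁ - c₂^2*s₂ - c₄^2*s₃ - c₃^2*s₄ = 0 ∧
    c₁^2*a - c₃*c₄*s₂ - c₂*c₃*s₃ - c₂*c₄*s₄ = 0 ∧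
    c₂^2*a + c₃*c₄*s₁ - c₁*c₃*s₃ + c₁*c₄*s₄ = 0 ∧
    c₃^2*a + c₂*c₄*s₁ - c₁*c₄*s₂ + c₁*c₂*s₃ = 0 ∧
    c₄^2*a + c₂*c₃*s₁ + c₁*c₃*s₂ - c₁*c₂*s₄ = 0 := by
  have hd : 3*(c₁*c₂*c₃*c₄) ≠ 0 := mul_ne_zero h3 hc
  refine ⟨?_, ?_, ?_, ?_, ?_⟩ <;> refine mul_left_cancel₀ hd ?_
  · linear_combination (-c₁^3)*L₁ + (-c₂^3)*L₂ + (-c₄^3)*L₃ + (-c₃^3)*L₄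
  · linear_combination (-c₂*c₃*c₄)*(L₂ + L₃ + L₄)
  · linear_combination (c₁*c₃*c₄)*(L₁ - L₃ + L₄)
  · linear_combination (c₁*c₂*c₄)*(L₁ - L₂ + L₃)
  · linear_combination (c₁*c₂*c₃)*(L₁ + L₂ - L₄)

theorem stmt10_general {K : Type*} [Field K] (h3 : (3 : K) ≠ 0)
    (c₁ c₂ c₃ c₄ : K) (hc : c₁*c₂*c₃*c₄ ≠ 0)
    (z₁ z₂ z₃ z₄ z₅ z₆ z₇ z₈ z₉ : K)
    (L₁ : (c₂^3+c₃^3+c₄^3)*z₁ + 3*c₂*c₃*c₄*(z₂+z₃) = 0)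
    (L₂ : (-c₁^3-c₃^3+c₄^3)*z₁ + 3*c₁*c₃*c₄*(z₄+z₇) = 0)
    (L₃ : (-c₁^3-c₂^3+c₃^3)*z₁ + 3*c₁*c₂*c₃*(z₆+z₈) = 0)
    (L₄ : (-c₁^3+c₂^3-c₄^3)*z₁ + 3*c₁*c₂*c₄*(z₅+z₉) = 0) :
    let M : Matrix (Fin 9) (Fin 9) K :=
      !![0, -c₁^2, -c₁^2, -c₂^2, -c₃^2, -c₄^2, -c₂^2, -c₄^2, -c₃^2;
         c₁^2, 0, 0, -(c₃*c₄), -(c₂*c₄), -(c₂*c₃), -(c₃*c₄), -(c₂*c₃), -(c₂*c₄);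
         c₁^2, 0, 0, -(c₃*c₄), -(c₂*c₄), -(c₂*c₃), -(c₃*c₄), -(c₂*c₃), -(c₂*c₄);
         c₂^2, c₃*c₄, c₃*c₄, 0, c₁*c₄, -(c₁*c₃), 0, -(c₁*c₃), c₁*c₄;
         c₃^2, c₂*c₄, c₂*c₄, -(c₁*c₄), 0, c₁*c₂, -(c₁*c₄), c₁*c₂, 0;
         c₄^2, c₂*c₃, c₂*c₃, c₁*c₃, -(c₁*c₂), 0, c₁*c₃, 0, -(c₁*c₂);
         c₂^2, c₃*c₄, c₃*c₄, 0, c₁*c₄, -(c₁*c₃), 0, -(c₁*c₃), c₁*c₄;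
         c₄^2, c₂*c₃, c₂*c₃, c₁*c₃, -(c₁*c₂), 0, c₁*c₃, 0, -(c₁*c₂);
         c₃^2, c₂*c₄, c₂*c₄, -(c₁*c₄), 0, c₁*c₂, -(c₁*c₄), c₁*c₂, 0]
    M.mulVec ![z₁, z₂, z₃, z₄, z₅, z₆, z₇, z₈, z₉] = 0 := by
  intro M
  obtain ⟨r₀, r₁, r₃, r₄, r₅⟩ :=
    reducedRows_eq_zero c₁ c₂ c₃ c₄ z₁ _ _ _ _ h3 hc L₁ L₂ L₃ L₄
  funext i
  fin_cases i <;>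
    simp only [M, Matrix.mulVec, dotProduct, Fin.sum_univ_succ, Matrix.of_apply, Fin.reduceFinMk,
      Matrix.cons_val, Matrix.cons_val_succ, Pi.zero_apply]
  · linear_combination r₀
  · linear_combination r₁
  · linear_combination r₁
  · linear_combination r₃
  · linear_combination r₄
  · linear_combination r₅
  · linear_combination r₃
  · linear_combination r₅
  · linear_combination r₄

/-- Any vector satisfying the four linear equations (3.8) lies in the kernel of the
matrix `Φ_c(z_c)` of (3.7), assuming `c₁c₂c₃c₄ ≠ 0`. -/
theorem stmt10 {K : Type*} [Field K] (h2 : (2 : K) ≠ 0) (h3 : (3 : K) ≠ 0)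
    (c₁ c₂ c₃ c₄ : K) (hc : c₁*c₂*c₃*c₄ ≠ 0)
    (z₁ z₂ z₃ z₄ z₅ z₆ z₇ z₈ z₉ : K)
    (L₁ : (c₂^3+c₃^3+c₄^3)*z₁ + 3*c₂*c₃*c₄*(z₂+z₃) = 0)
    (L₂ : (-c₁^3-c₃^3+c₄^3)*z₁ + 3*c₁*c₃*c₄*(z₄+z₇) = 0)
    (L₃ : (-c₁^3-c₂^3+c₃^3)*z₁ + 3*c₁*c₂*c₃*(z₆+z₈) = 0)
    (L₄ : (-c₁^3+c₂^3-c₄^3)*z₁ + 3*c₁*c₂*c₄*(z₅+z₉) = 0) :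
    let M : Matrix (Fin 9) (Fin 9) K :=
      !![0, -c₁^2, -c₁^2, -c₂^2, -c₃^2, -c₄^2, -c₂^2, -c₄^2, -c₃^2;
         c₁^2, 0, 0, -(c₃*c₄), -(c₂*c₄), -(c₂*c₃), -(c₃*c₄), -(c₂*c₃), -(c₂*c₄);
         c₁^2, 0, 0, -(c₃*c₄), -(c₂*c₄), -(c₂*c₃), -(c₃*c₄), -(c₂*c₃), -(c₂*c₄);
         c₂^2, c₃*c₄, c₃*c₄, 0, c₁*c₄, -(c₁*c₃), 0, -(c₁*c₃), c₁*c₄;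
         c₃^2, c₂*c₄, c₂*c₄, -(c₁*c₄), 0, c₁*c₂, -(c₁*c₄), c₁*c₂, 0;
         c₄^2, c₂*c₃, c₂*c₃, c₁*c₃, -(c₁*c₂), 0, c₁*c₃, 0, -(c₁*c₂);
         c₂^2, c₃*c₄, c₃*c₄, 0, c₁*c₄, -(c₁*c₃), 0, -(c₁*c₃), c₁*c₄;
         c₄^2, c₂*c₃, c₂*c₃, c₁*c₃, -(c₁*c₂), 0, c₁*c₃, 0, -(c₁*c₂);
         c₃^2, c₂*c₄, c₂*c₄, -(c₁*c₄), 0, c₁*c₂, -(c₁*c₄), c₁*c₂, 0]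
    M.mulVec ![z₁, z₂, z₃, z₄, z₅, z₆, z₇, z₈, z₉] = 0 :=
  stmt10_general h3 c₁ c₂ c₃ c₄ hc z₁ z₂ z₃ z₄ z₅ z₆ z₇ z₈ z₉ L₁ L₂ L₃ L₄
end

section
/- The five principal 4×4 Pfaffians of the 5×5 skew-symmetric matrix ψ(c) (with ψ₁₂ = c₁², ψ₁₃ = c₂², ψ₁₄ = c₃², ψ₁₅ = c₄², ψ₂₃ = c₃c₄, ψ₂₄ = c₂c₄, ψ₂₅ = c₂c₃, ψ₃₄ = −c₁c₄, ψ₃₅ = c₁c₃, ψ₄₅ = −c₁c₂) generate the same ideal as the five coefficients of the Coble cubic: 3c₁c₂c₃c₄, c₁(c₂³+c₃³+c₄³), c₂(c₁³+c₃³−c₄³), c₃(c₁³−c₂³+c₄³), c₄(c₁³+c₂³−c₃³), in K[c₁,…,c₄] with char K ≠ 3; in particular each Pfaffian equals one of the coefficients up to sign. -/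
open MvPolynomial

theorem Ideal.span_range_le_of_eq_or_eq_neg {R ι : Type*} [CommRing R] {f g : ι → R}
    (h : ∀ i, f i = g i ∨ f i = -g i) : Ideal.span (Set.range f) ≤ Ideal.span (Set.range g) := by
  rw [Ideal.span_le]
  rintro _ ⟨i, rfl⟩
  rcases h i with hi | hi <;> rw [hi]
  · exact Ideal.subset_span ⟨i, rfl⟩
  · exact neg_mem (Ideal.subset_span ⟨i, rfl⟩)

theorem Ideal.span_range_eq_of_eq_or_eq_neg {R ι : Type*} [CommRing R] {f g : ι → R}
    (h : ∀ i, f i = g i ∨ f i = -g i) : Ideal.span (Set.range f) = Ideal.span (Set.range g) :=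
  le_antisymm (span_range_le_of_eq_or_eq_neg h) <| span_range_le_of_eq_or_eq_neg fun i => by
    rcases h i with hi | hi
    · exact .inl hi.symm
    · exact .inr (by rw [hi, neg_neg])

theorem stmt13_general {K : Type*} [Field K] :
    let c : Fin 4 → MvPolynomial (Fin 4) K := fun i => X i
    let ψ : Matrix (Fin 5) (Fin 5) (MvPolynomial (Fin 4) K) :=
      !![0, (c 0)^2, (c 1)^2, (c 2)^2, (c 3)^2;
         -(c 0)^2, 0, c 2*c 3, c 1*c 3, c 1*c 2;
         -(c 1)^2, -(c 2*c 3), 0, -(c 0*c 3), c 0*c 2;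
         -(c 2)^2, -(c 1*c 3), c 0*c 3, 0, -(c 0*c 1);
         -(c 3)^2, -(c 1*c 2), -(c 0*c 2), c 0*c 1, 0]
    let pf : Fin 5 → MvPolynomial (Fin 4) K :=
      ![ψ 1 2 * ψ 3 4 - ψ 1 3 * ψ 2 4 + ψ 1 4 * ψ 2 3,
        ψ 0 2 * ψ 3 4 - ψ 0 3 * ψ 2 4 + ψ 0 4 * ψ 2 3,
        ψ 0 1 * ψ 3 4 - ψ 0 3 * ψ 1 4 + ψ 0 4 * ψ 1 3,
        ψ 0 1 * ψ 2 4 - ψ 0 2 * ψ 1 4 + ψ 0 4 * ψ 1 2,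
        ψ 0 1 * ψ 2 3 - ψ 0 2 * ψ 1 3 + ψ 0 3 * ψ 1 2]
    let γ : Fin 5 → MvPolynomial (Fin 4) K :=
      ![3*(c 0*c 1*c 2*c 3), c 0*((c 1)^3+(c 2)^3+(c 3)^3),
        c 1*((c 0)^3+(c 2)^3-(c 3)^3), c 2*((c 0)^3-(c 1)^3+(c 3)^3),
        c 3*((c 0)^3+(c 1)^3-(c 2)^3)]
    Ideal.span (Set.range pf) = Ideal.span (Set.range γ) ∧
    ∀ i : Fin 5, ∃ j : Fin 5, pf i = γ j ∨ pf i = -γ j := by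
  intro c ψ pf γ
  have pf_eq_pm_γ : ∀ i, pf i = γ i ∨ pf i = -γ i := by
    intro i
    fin_cases i <;>
      simp only [Fin.isValue, Fin.zero_eta, Fin.mk_one, Fin.reduceFinMk, Matrix.of_apply,
        Matrix.cons_val', Matrix.cons_val, Matrix.cons_val_fin_one, Matrix.cons_val_one,
        Matrix.cons_val_zero, pf, ψ, c, γ]
    · right; ring
    · right; ring
    · right; ring
    · left; ring
    · right; ring
  exact ⟨Ideal.span_range_eq_of_eq_or_eq_neg pf_eq_pm_γ, fun i => ⟨i, pf_eq_pm_γ i⟩⟩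

/-- The five principal 4×4 Pfaffians of `ψ(c)` generate the same ideal as the five
coefficients of the Coble cubic, and each Pfaffian equals one of the coefficients up to
sign. -/
theorem stmt13 {K : Type*} [Field K] (h3 : (3 : K) ≠ 0) :
    let c : Fin 4 → MvPolynomial (Fin 4) K := fun i => X i
    let ψ : Matrix (Fin 5) (Fin 5) (MvPolynomial (Fin 4) K) :=
      !![0, (c 0)^2, (c 1)^2, (c 2)^2, (c 3)^2;
         -(c 0)^2, 0, c 2*c 3, c 1*c 3, c 1*c 2;
         -(c 1)^2, -(c 2*c 3), 0, -(c 0*c 3), c 0*c 2;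
         -(c 2)^2, -(c 1*c 3), c 0*c 3, 0, -(c 0*c 1);
         -(c 3)^2, -(c 1*c 2), -(c 0*c 2), c 0*c 1, 0]
    let pf : Fin 5 → MvPolynomial (Fin 4) K :=
      ![ψ 1 2 * ψ 3 4 - ψ 1 3 * ψ 2 4 + ψ 1 4 * ψ 2 3,
        ψ 0 2 * ψ 3 4 - ψ 0 3 * ψ 2 4 + ψ 0 4 * ψ 2 3,
        ψ 0 1 * ψ 3 4 - ψ 0 3 * ψ 1 4 + ψ 0 4 * ψ 1 3,
        ψ 0 1 * ψ 2 4 - ψ 0 2 * ψ 1 4 + ψ 0 4 * ψ 1 2,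
        ψ 0 1 * ψ 2 3 - ψ 0 2 * ψ 1 3 + ψ 0 3 * ψ 1 2]
    let γ : Fin 5 → MvPolynomial (Fin 4) K :=
      ![3*(c 0*c 1*c 2*c 3), c 0*((c 1)^3+(c 2)^3+(c 3)^3),
        c 1*((c 0)^3+(c 2)^3-(c 3)^3), c 2*((c 0)^3-(c 1)^3+(c 3)^3),
        c 3*((c 0)^3+(c 1)^3-(c 2)^3)]
    Ideal.span (Set.range pf) = Ideal.span (Set.range γ) ∧
    ∀ i : Fin 5, ∃ j : Fin 5, pf i = γ j ∨ pf i = -γ j :=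
  stmt13_general
end

section
/- Let K be a field of characteristic ≠ 3. The plane cubic λ(x³+y³+z³) + μ·xyz = 0 over K is smooth (i.e., the common vanishing locus in K³∖{0} of the three partial derivatives 3λx² + μyz, 3λy² + μxz, 3λz² + μxy is empty) if and only if λ(μ³ + 27λ³) ≠ 0, provided K is algebraically closed. -/
/-!
At a singular point the partials give `3λx² = -μyz`, `3λy² = -μxz`, `3λz² = -μxy`; multiplying
them yields `(μ³ + 27λ³)(xyz)² = 0`. So if `λ(μ³ + 27λ³) ≠ 0`, one coordinate vanishes, and then
the partials force the other two to vanish as well. Conversely `(1, 0, 0)` is singular when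
`λ = 0`, and `(3λ, -μ, -μ)` is singular when `μ³ + 27λ³ = 0`.
-/

section HesseCubic

variable {R : Type*} [CommRing R]

def IsHesseSingularPoint (l m x y z : R) : Prop :=
  l*(x^3+y^3+z^3) + m*(x*y*z) = 0 ∧ 3*l*x^2 + m*(y*z) = 0 ∧
    3*l*y^2 + m*(x*z) = 0 ∧ 3*l*z^2 + m*(x*y) = 0

theorem isHesseSingularPoint_zero_left (m : R) : IsHesseSingularPoint 0 m 1 0 0 := by
  refine ⟨?_, ?_, ?_, ?_⟩ <;> ring

theorem isHesseSingularPoint_of_disc_eq_zero {l m : R} (h : m^3 + 27*l^3 = 0) :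
    IsHesseSingularPoint l m (3*l) (-m) (-m) := by
  refine ⟨?_, ?_, ?_, ?_⟩
  · linear_combination l * h
  · linear_combination h
  · ring
  · ring

theorem hesse_disc_mul_sq_eq_zero {l m x y z : R} (hx : 3*l*x^2 + m*(y*z) = 0)
    (hy : 3*l*y^2 + m*(x*z) = 0) (hz : 3*l*z^2 + m*(x*y) = 0) :
    (m^3 + 27*l^3) * (x*y*z)^2 = 0 := by
  linear_combination (3*l*y^2) * (3*l*z^2) * hx + (-m*(y*z)) * (3*l*z^2) * hy
    + (-m*(y*z)) * (-m*(x*z)) * hz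

variable [IsDomain R]

theorem eq_zero_of_hesse_partial {l m a n : R} (h3l : 3*l ≠ 0) (h : 3*l*a^2 + m*n = 0)
    (hn : n = 0) : a = 0 := by
  simpa [hn, h3l] using h

theorem eq_zero_of_hesse_partials {l m x y z : R} (h3l : 3*l ≠ 0) (hd : m^3 + 27*l^3 ≠ 0)
    (hx : 3*l*x^2 + m*(y*z) = 0) (hy : 3*l*y^2 + m*(x*z) = 0)
    (hz : 3*l*z^2 + m*(x*y) = 0) : x = 0 ∧ y = 0 ∧ z = 0 := by
  have hxyz : x*y*z = 0 := pow_eq_zero_iff two_ne_zero |>.1 <|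
    (mul_eq_zero.1 (hesse_disc_mul_sq_eq_zero hx hy hz)).resolve_left hd
  rcases mul_eq_zero.1 hxyz with hxy | rfl
  · rcases mul_eq_zero.1 hxy with rfl | rfl
    · exact ⟨rfl, eq_zero_of_hesse_partial h3l hy (zero_mul z),
        eq_zero_of_hesse_partial h3l hz (zero_mul y)⟩
    · exact ⟨eq_zero_of_hesse_partial h3l hx (zero_mul z), rfl,
        eq_zero_of_hesse_partial h3l hz (mul_zero x)⟩
  · exact ⟨eq_zero_of_hesse_partial h3l hx (mul_zero y),
      eq_zero_of_hesse_partial h3l hy (mul_zero x), rfl⟩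

end HesseCubic

theorem stmt15_general {K : Type*} [Field K] (h3 : (3 : K) ≠ 0) (l m : K) :
    (∀ x y z : K, (x, y, z) ≠ (0, 0, 0) →
      ¬(l*(x^3+y^3+z^3) + m*(x*y*z) = 0 ∧ 3*l*x^2 + m*(y*z) = 0 ∧
        3*l*y^2 + m*(x*z) = 0 ∧ 3*l*z^2 + m*(x*y) = 0)) ↔
    l*(m^3 + 27*l^3) ≠ 0 := by
  constructor
  · intro hsmooth hdisc
    by_cases hl : l = 0
    · subst hl
      exact hsmooth 1 0 0 (by simp) (isHesseSingularPoint_zero_left m)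
    · exact hsmooth (3*l) (-m) (-m) (by simp [h3, hl])
        (isHesseSingularPoint_of_disc_eq_zero ((mul_eq_zero.1 hdisc).resolve_left hl))
  · intro hne x y z hxyz ⟨_, hx, hy, hz⟩
    have h3l : 3*l ≠ 0 := mul_ne_zero h3 (left_ne_zero_of_mul hne)
    obtain ⟨rfl, rfl, rfl⟩ := eq_zero_of_hesse_partials h3l (right_ne_zero_of_mul hne) hx hy hz
    exact hxyz rfl

/-- Over an algebraically closed field of characteristic ≠ 3, the Hesse cubic
`λ(x³+y³+z³) + μxyz` is smooth iff `λ(μ³+27λ³) ≠ 0`. -/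
theorem stmt15 {K : Type*} [Field K] [IsAlgClosed K] (h3 : (3 : K) ≠ 0) (l m : K) :
    (∀ x y z : K, (x, y, z) ≠ (0, 0, 0) →
      ¬(l*(x^3+y^3+z^3) + m*(x*y*z) = 0 ∧ 3*l*x^2 + m*(y*z) = 0 ∧
        3*l*y^2 + m*(x*z) = 0 ∧ 3*l*z^2 + m*(x*y) = 0)) ↔
    l*(m^3 + 27*l^3) ≠ 0 :=
  stmt15_general h3 l m
end

section
/- For the three quadrics q₁ = c₁²z₃z₉ − c₂²z₄z₅, q₂ = c₁²z₂z₅ − c₂²z₇z₉, q₃ = c₁²z₄z₇ − c₂²z₂z₃ over a field K with c₁c₂(c₁⁶ − c₂⁶) ≠ 0, there exists a point in their common zero locus at which the Jacobian matrix of (q₁,q₂,q₃) with respect to (z₂,z₃,z₄,z₅,z₇,z₉) has rank 3; hence q₁,q₂,q₃ form a regular sequence in K[z₂,z₃,z₄,z₅,z₇,z₉]. -/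
/-!
The point `z₂ = z₇ = 0`, `z₃ = c₂²`, `z₄ = z₅ = c₁`, `z₉ = 1` lies on the three quadrics, and the
minor of the Jacobian on the columns of `z₃, z₂, z₇` is `c₁²(c₁⁶ - c₂⁶) ≠ 0`.

For regularity write `a = c₁²`, `b = c₂²`. Since `q₁ = a z₉ z₃ - b z₄ z₅` is linear in `z₃`,
multiplying `F` by a power of `a z₉` reduces it modulo `q₁` to a polynomial `G` free of `z₃`;
likewise for `q₂ = a z₅ z₂ - b z₇ z₉` and `z₂`. The substitution `z₃ ↦ b z₄ z₅ / (a z₉)` into the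
fraction field kills `q₁` and fixes `q₂` and `G`, so `q₂ F ∈ (q₁)` forces `G = 0`, i.e.
`z₉ᵐ F ∈ (q₁)`. Substituting moreover `z₂ ↦ b z₇ z₉ / (a z₅)` kills `q₂` and sends `q₃` to
`(a³ - b³) / a² · z₄ z₇ ≠ 0`, so `q₃ F ∈ (q₁, q₂)` forces `z₅ⁿ z₉ᵐ F ∈ (q₁, q₂)`.

These powers cancel: `z₉` is a prime not dividing `q₁`. Modulo `(q₁, q₂)` the variable `z₅` is a
zero divisor, as `(q₁, q₂) : z₅ = (q₁, q₂, g)` with `g = a² z₂ z₃ - b² z₄ z₇`, but together with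
`q₃` it still cancels: `q₃ c g ∈ (q₁, q₂) ⊆ (z₅, z₉)` forces `c ∈ (z₅, z₉)`, and
`(z₅, z₉) g ⊆ (q₁, q₂)`. The symmetry `(z₂ z₃)(z₄ z₇)(z₅ z₉)` swaps `q₁` and `q₂`, fixes `q₃`, and
turns the case of `z₉` into that of `z₅`.
-/

open MvPolynomial

namespace RingTheory.Sequence

theorem isRegular_self_iff {R : Type*} [CommRing R] (rs : List R) :
    IsRegular R rs ↔ (∀ i (h : i < rs.length) (x : R),
      rs[i] * x ∈ Ideal.ofList (rs.take i) → x ∈ Ideal.ofList (rs.take i)) ∧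
      Ideal.ofList rs ≠ ⊤ := by
  simp only [isRegular_iff, isWeaklyRegular_iff, isSMulRegular_quotient_iff_mem_of_smul_mem,
    smul_eq_mul, Ideal.mul_top, ne_comm (a := ⊤)]

end RingTheory.Sequence

namespace MvPolynomial

variable {R σ : Type*} [CommRing R]

theorem sub_bind₁_indicator_compl_mem_span (s : Set σ) (F : MvPolynomial σ R) :
    F - bind₁ (sᶜ.indicator (X : σ → MvPolynomial σ R)) F ∈ Ideal.span (X '' s) := by
  induction F using MvPolynomial.induction_on with
  | C a => simp
  | add p q hp hq => simpa [add_sub_add_comm] using add_mem hp hq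
  | mul_X p j hp =>
    by_cases hj : j ∈ s
    · simpa [hj] using Ideal.mul_mem_left _ p (Ideal.subset_span (Set.mem_image_of_mem X hj))
    · simpa [hj, sub_mul] using Ideal.mul_mem_right (X j) _ hp

theorem aeval_eq_algebraMap_of_mem_supported {L : Type*} [CommSemiring L]
    [Algebra (MvPolynomial σ R) L] [Algebra R L] [IsScalarTower R (MvPolynomial σ R) L]
    {s : Set σ} {f : σ → L} (hf : ∀ j ∈ s, f j = algebraMap (MvPolynomial σ R) L (X j))
    {G : MvPolynomial σ R} (hG : G ∈ supported R s) :
    aeval f G = algebraMap _ L G := by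
  refine (AlgHom.eqOn_adjoin_iff (φ := aeval f)
    (ψ := IsScalarTower.toAlgHom R (MvPolynomial σ R) L)).mpr ?_ hG
  rintro _ ⟨j, hj, rfl⟩
  simpa using hf j hj

theorem bind₁_indicator_compl_eq_zero_of_X_dvd {s : Set σ} {i : σ} (hi : i ∈ s)
    {F : MvPolynomial σ R} (h : X i ∣ F) :
    bind₁ (sᶜ.indicator (X : σ → MvPolynomial σ R)) F = 0 := by
  obtain ⟨H, rfl⟩ := h
  simp [hi]

end MvPolynomial

theorem Algebra.exists_pow_mul_sub_mem_span_of_mem_adjoin_insert {R A : Type*} [CommSemiring R]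
    [CommRing A] [Algebra R A] {T : Set A} {x u v : A} (hu : u ∈ adjoin R T) (hv : v ∈ adjoin R T)
    {F : A} (hF : F ∈ adjoin R (insert x T)) :
    ∃ n, ∃ G ∈ adjoin R T, u ^ n * F - G ∈ Ideal.span {u * x - v} := by
  induction hF using Algebra.adjoin_induction with
  | mem y hy =>
    rcases hy with rfl | hy
    · exact ⟨1, v, hv, by simp⟩
    · exact ⟨0, y, subset_adjoin hy, by simp⟩
  | algebraMap r => exact ⟨0, algebraMap R A r, Subalgebra.algebraMap_mem _ r, by simp⟩
  | add p q _ _ hp hq =>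
    obtain ⟨m, G, hG, hpG⟩ := hp
    obtain ⟨n, H, hH, hqH⟩ := hq
    refine ⟨m + n, u ^ n * G + u ^ m * H, add_mem (mul_mem (pow_mem hu n) hG)
      (mul_mem (pow_mem hu m) hH), ?_⟩
    have e : u ^ (m + n) * (p + q) - (u ^ n * G + u ^ m * H) =
        u ^ n * (u ^ m * p - G) + u ^ m * (u ^ n * q - H) := by ring
    rw [e]
    exact add_mem (Ideal.mul_mem_left _ _ hpG) (Ideal.mul_mem_left _ _ hqH)
  | mul p q _ _ hp hq =>
    obtain ⟨m, G, hG, hpG⟩ := hp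
    obtain ⟨n, H, hH, hqH⟩ := hq
    refine ⟨m + n, G * H, mul_mem hG hH, ?_⟩
    have e : u ^ (m + n) * (p * q) - G * H =
        u ^ n * q * (u ^ m * p - G) + G * (u ^ n * q - H) := by ring
    rw [e]
    exact add_mem (Ideal.mul_mem_left _ _ hpG) (Ideal.mul_mem_left _ _ hqH)

namespace Ideal

variable {R : Type*} [CommRing R]

theorem mem_of_sub_mem_of_map_eq_zero {L : Type*} [CommRing L] {ψ ι : R →+* L}
    (hι : Function.Injective ι) {I : Ideal R} (hI : I ≤ RingHom.ker ψ) {y G : R}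
    (hy : ψ y = 0) (hG : ψ G = ι G) (h : y - G ∈ I) : y ∈ I := by
  have hψG : ψ G = 0 := by simpa [hy] using (hI h : ψ (y - G) = 0)
  have : G = 0 := (injective_iff_map_eq_zero ι).mp hι G (hG ▸ hψG)
  simpa [this] using h

theorem mem_of_pow_mul_mem {I : Ideal R} {r q : R}
    (h : ∀ F, r * F ∈ I → q * F ∈ I → F ∈ I) (n : ℕ) {F : R}
    (hr : r ^ n * F ∈ I) (hq : q * F ∈ I) : F ∈ I := by
  induction n generalizing F with
  | zero => simpa using hr
  | succ n ih =>
    refine h F (ih ?_ ?_) hq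
    · simpa [pow_succ, mul_assoc] using hr
    · simpa [mul_left_comm] using I.mul_mem_left r hq

theorem mem_span_singleton_of_pow_mul_mem [IsDomain R] {p f F : R} (hp : Prime p)
    (hpf : ¬ p ∣ f) (n : ℕ) (h : p ^ n * F ∈ span {f}) : F ∈ span {f} := by
  obtain ⟨g, hg⟩ := mem_span_singleton'.mp h
  have hdvd : p ^ n ∣ f * g := ⟨F, by rw [mul_comm, hg]⟩
  obtain ⟨g', rfl⟩ := hp.pow_dvd_of_dvd_mul_left n hpf hdvd
  refine mem_span_singleton'.mpr ⟨g', mul_left_cancel₀ (pow_ne_zero n hp.ne_zero) ?_⟩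
  rw [← hg]; ring

end Ideal

theorem Matrix.rank_eq_card_of_det_submatrix_ne_zero {m n K : Type*} [Fintype m] [DecidableEq m]
    [Fintype n] [Field K] (A : Matrix m n K) (c : m → n) (h : (A.submatrix id c).det ≠ 0) :
    A.rank = Fintype.card m := by
  refine le_antisymm A.rank_le_card_height ?_
  calc Fintype.card m = (A.submatrix id c).rank := by
        rw [Matrix.rank_of_isUnit _ ((Matrix.isUnit_iff_isUnit_det _).mpr h.isUnit)]
    _ ≤ A.rank := A.rank_submatrix_le id c

namespace ThreeQuadrics

variable {K : Type*} [Field K] (a b : K)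

-- `X 0, …, X 5` stand for `z₂, z₃, z₄, z₅, z₇, z₉`, and `a, b` for `c₁², c₂²`.

noncomputable def q₁ : MvPolynomial (Fin 6) K := C a * X 1 * X 5 - C b * X 2 * X 3
noncomputable def q₂ : MvPolynomial (Fin 6) K := C a * X 0 * X 3 - C b * X 4 * X 5
noncomputable def q₃ : MvPolynomial (Fin 6) K := C a * X 2 * X 4 - C b * X 0 * X 1
noncomputable def g : MvPolynomial (Fin 6) K := C (a ^ 2) * X 0 * X 1 - C (b ^ 2) * X 2 * X 4

variable {a b}

theorem q₁_ne_zero (ha : a ≠ 0) : q₁ a b ≠ 0 := fun h => by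
  simpa [q₁, ha] using congrArg (eval ![0, 1, 0, 0, 0, 1]) h

theorem q₂_ne_zero (ha : a ≠ 0) : q₂ a b ≠ 0 := fun h => by
  simpa [q₂, ha] using congrArg (eval ![1, 0, 0, 1, 0, 0]) h

theorem q₃_ne_zero (ha : a ≠ 0) : q₃ a b ≠ 0 := fun h => by
  simpa [q₃, ha] using congrArg (eval ![0, 0, 1, 0, 1, 0]) h

theorem g_ne_zero (ha : a ≠ 0) : g a b ≠ 0 := fun h => by
  simpa [g, ha] using congrArg (eval ![1, 1, 0, 0, 0, 0]) h

theorem X_three_mul_g : X 3 * g a b = C b * X 4 * q₁ a b + C a * X 1 * q₂ a b := by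
  simp only [g, q₁, q₂, map_pow]; ring

theorem X_five_mul_g : X 5 * g a b = C a * X 0 * q₁ a b + C b * X 2 * q₂ a b := by
  simp only [g, q₁, q₂, map_pow]; ring

variable (a b)

theorem exists_pow_mul_sub_mem_span_q₁ (F : MvPolynomial (Fin 6) K) :
    ∃ m, ∃ G ∈ supported K ({1}ᶜ : Set (Fin 6)),
      (C a * X 5) ^ m * F - G ∈ Ideal.span {q₁ a b} := by
  have hF : F ∈ Algebra.adjoin K (insert (X 1) (X '' ({1}ᶜ : Set (Fin 6)))) := by
    rw [← Set.image_insert_eq, Set.insert_eq, Set.union_compl_self, ← supported_eq_adjoin_X,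
      supported_univ]
    trivial
  have hu : C a * X 5 ∈ supported K ({1}ᶜ : Set (Fin 6)) :=
    mul_mem (Subalgebra.algebraMap_mem _ a) (X_mem_supported.mpr (by decide))
  have hv : C b * X 2 * X 3 ∈ supported K ({1}ᶜ : Set (Fin 6)) :=
    mul_mem (mul_mem (Subalgebra.algebraMap_mem _ b) (X_mem_supported.mpr (by decide)))
      (X_mem_supported.mpr (by decide))
  obtain ⟨m, G, hG, h⟩ := Algebra.exists_pow_mul_sub_mem_span_of_mem_adjoin_insert hu hv hF
  have hq₁ : C a * X 5 * X 1 - C b * X 2 * X 3 = q₁ a b := by rw [q₁]; ring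
  exact ⟨m, G, hG, hq₁ ▸ h⟩

theorem exists_pow_mul_pow_mul_sub_mem_span_q₁_q₂ (F : MvPolynomial (Fin 6) K) :
    ∃ n m, ∃ G ∈ supported K ({2, 3, 4, 5} : Set (Fin 6)),
      (C a * X 3) ^ n * ((C a * X 5) ^ m * F) - G ∈ Ideal.span {q₁ a b, q₂ a b} := by
  obtain ⟨m, G₁, hG₁, h₁⟩ := exists_pow_mul_sub_mem_span_q₁ a b F
  have hcompl : ({1}ᶜ : Set (Fin 6)) = insert 0 {2, 3, 4, 5} := by ext j; fin_cases j <;> simp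
  rw [hcompl, supported_eq_adjoin_X, Set.image_insert_eq] at hG₁
  have hu : C a * X 3 ∈ supported K ({2, 3, 4, 5} : Set (Fin 6)) :=
    mul_mem (Subalgebra.algebraMap_mem _ a) (X_mem_supported.mpr (by simp))
  have hv : C b * X 4 * X 5 ∈ supported K ({2, 3, 4, 5} : Set (Fin 6)) :=
    mul_mem (mul_mem (Subalgebra.algebraMap_mem _ b) (X_mem_supported.mpr (by simp)))
      (X_mem_supported.mpr (by simp))
  obtain ⟨n, G, hG, h₂⟩ := Algebra.exists_pow_mul_sub_mem_span_of_mem_adjoin_insert hu hv hG₁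
  have hq₂ : C a * X 3 * X 0 - C b * X 4 * X 5 = q₂ a b := by rw [q₂]; ring
  refine ⟨n, m, G, hG, ?_⟩
  have e : (C a * X 3) ^ n * ((C a * X 5) ^ m * F) - G =
      (C a * X 3) ^ n * ((C a * X 5) ^ m * F - G₁) + ((C a * X 3) ^ n * G₁ - G) := by ring
  rw [e]
  exact add_mem (Ideal.mul_mem_left _ _ (Ideal.span_mono (by simp) h₁))
    (Ideal.span_mono (by simp) (hq₂ ▸ h₂))

local notation "L" => FractionRing (MvPolynomial (Fin 6) K)
local notation "ι" => algebraMap (MvPolynomial (Fin 6) K) L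

noncomputable def genericPoint₁ : Fin 6 → L :=
  Function.update (fun j => ι (X j)) 1
    (algebraMap K L b * ι (X 2) * ι (X 3) / (algebraMap K L a * ι (X 5)))

noncomputable def genericPoint₂ : Fin 6 → L :=
  Function.update (genericPoint₁ a b) 0
    (algebraMap K L b * ι (X 4) * ι (X 5) / (algebraMap K L a * ι (X 3)))

variable {a b}

theorem algebraMap_X_ne_zero (j : Fin 6) : ι (X j) ≠ 0 :=
  (map_ne_zero_iff _ (IsFractionRing.injective _ _)).mpr (X_ne_zero j)

@[simp]
theorem algebraMap_C_eq (c : K) : ι (C c) = algebraMap K L c :=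
  (IsScalarTower.algebraMap_apply K _ L c).symm

theorem aeval_genericPoint₁_q₁ (ha : a ≠ 0) : aeval (genericPoint₁ a b) (q₁ a b) = 0 := by
  have : algebraMap K L a ≠ 0 := by simpa
  have := algebraMap_X_ne_zero (K := K) 5
  simp only [q₁, genericPoint₁, map_sub, map_mul, algHom_C, aeval_X, Function.update_self, ne_eq,
    Fin.reduceEq, not_false_eq_true, Function.update_of_ne]
  field_simp
  ring

theorem aeval_genericPoint₁_q₂ : aeval (genericPoint₁ a b) (q₂ a b) = ι (q₂ a b) := by
  simp [q₂, genericPoint₁]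

theorem aeval_genericPoint₂_q₁ (ha : a ≠ 0) : aeval (genericPoint₂ a b) (q₁ a b) = 0 := by
  have : algebraMap K L a ≠ 0 := by simpa
  have := algebraMap_X_ne_zero (K := K) 5
  simp only [q₁, genericPoint₂, genericPoint₁, map_sub, map_mul, algHom_C, aeval_X, ne_eq,
    one_ne_zero, not_false_eq_true, Function.update_of_ne, Function.update_self, Fin.reduceEq]
  field_simp
  ring

theorem aeval_genericPoint₂_q₂ (ha : a ≠ 0) : aeval (genericPoint₂ a b) (q₂ a b) = 0 := by
  have : algebraMap K L a ≠ 0 := by simpa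
  have := algebraMap_X_ne_zero (K := K) 3
  simp only [q₂, genericPoint₂, genericPoint₁, map_sub, map_mul, algHom_C, aeval_X,
    Function.update_self, ne_eq, Fin.reduceEq, not_false_eq_true, Function.update_of_ne]
  field_simp
  ring

theorem aeval_genericPoint₂_q₃ (ha : a ≠ 0) :
    aeval (genericPoint₂ a b) (q₃ a b) =
      algebraMap K L ((a ^ 3 - b ^ 3) / a ^ 2) * ι (X 2) * ι (X 4) := by
  have : algebraMap K L a ≠ 0 := by simpa
  have := algebraMap_X_ne_zero (K := K) 3
  have := algebraMap_X_ne_zero (K := K) 5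
  simp only [q₃, genericPoint₂, genericPoint₁, map_sub, map_mul, algHom_C, aeval_X, ne_eq,
    Fin.reduceEq, not_false_eq_true, Function.update_of_ne, Function.update_self, one_ne_zero,
    map_div₀, map_pow]
  field_simp

theorem genericPoint₁_eq (j : Fin 6) (hj : j ∈ ({1}ᶜ : Set (Fin 6))) :
    genericPoint₁ a b j = ι (X j) :=
  Function.update_of_ne hj _ _

theorem genericPoint₂_eq (j : Fin 6) (hj : j ∈ ({2, 3, 4, 5} : Set (Fin 6))) :
    genericPoint₂ a b j = ι (X j) := by
  simp only [Set.mem_insert_iff, Set.mem_singleton_iff] at hj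
  rcases hj with rfl | rfl | rfl | rfl <;> rfl

theorem exists_X_five_pow_mul_mem_span_q₁ (ha : a ≠ 0) {F : MvPolynomial (Fin 6) K}
    (h : q₂ a b * F ∈ Ideal.span {q₁ a b}) : ∃ m, X 5 ^ m * F ∈ Ideal.span {q₁ a b} := by
  obtain ⟨m, G, hG, hFG⟩ := exists_pow_mul_sub_mem_span_q₁ a b F
  set ψ := (aeval (R := K) (genericPoint₁ a b)).toRingHom
  have hker : Ideal.span {q₁ a b} ≤ RingHom.ker ψ := by
    rw [Ideal.span_le, Set.singleton_subset_iff]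
    exact aeval_genericPoint₁_q₁ ha
  have hψq₂ : ψ (q₂ a b) ≠ 0 := by
    simpa [ψ, aeval_genericPoint₁_q₂] using
      (map_ne_zero_iff _ (IsFractionRing.injective _ L)).mpr (q₂_ne_zero (b := b) ha)
  have hψF : ψ F = 0 := by
    have := hker h
    rw [RingHom.mem_ker, map_mul] at this
    exact (mul_eq_zero.mp this).resolve_left hψq₂
  have hmF := Ideal.mem_of_sub_mem_of_map_eq_zero (IsFractionRing.injective _ L) hker
    (by rw [map_mul, hψF, mul_zero])
    (aeval_eq_algebraMap_of_mem_supported genericPoint₁_eq hG) hFG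
  rw [mul_pow, ← map_pow, mul_assoc,
    Ideal.unit_mul_mem_iff_mem _ ((pow_ne_zero m ha).isUnit.map C)] at hmF
  exact ⟨m, hmF⟩

theorem mem_span_q₁_of_q₂_mul_mem (ha : a ≠ 0) (hb : b ≠ 0) {F : MvPolynomial (Fin 6) K}
    (h : q₂ a b * F ∈ Ideal.span {q₁ a b}) : F ∈ Ideal.span {q₁ a b} := by
  obtain ⟨m, hm⟩ := exists_X_five_pow_mul_mem_span_q₁ ha h
  have hX₅ : ¬ X 5 ∣ q₁ a b := fun hdvd => by
    simpa [q₁, hb] using bind₁_indicator_compl_eq_zero_of_X_dvd (Set.mem_singleton 5) hdvd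
  exact Ideal.mem_span_singleton_of_pow_mul_mem X_prime hX₅ m hm

theorem mem_span_g_q₁_q₂_of_X_three_mul_mem (ha : a ≠ 0) (hb : b ≠ 0) {F : MvPolynomial (Fin 6) K}
    (h : X 3 * F ∈ Ideal.span {q₁ a b, q₂ a b}) : F ∈ Ideal.span {g a b, q₁ a b, q₂ a b} := by
  obtain ⟨G, H, hGH⟩ := Ideal.mem_span_pair.mp h
  obtain ⟨G', hG'⟩ := Ideal.mem_span_singleton'.mp
    (by simpa using sub_bind₁_indicator_compl_mem_span ({3} : Set (Fin 6)) G)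
  obtain ⟨H', hH'⟩ := Ideal.mem_span_singleton'.mp
    (by simpa using sub_bind₁_indicator_compl_mem_span ({3} : Set (Fin 6)) H)
  set e := bind₁ (R := K) (({3} : Set (Fin 6))ᶜ.indicator (X : Fin 6 → MvPolynomial (Fin 6) K))
  have he : e G * (C a * X 1) * X 5 = e H * (C b * X 4) * X 5 := by
    have := congrArg e hGH
    simp only [q₁, q₂, e, map_add, map_mul, map_sub, algHom_C, algebraMap_eq, bind₁_X_right,
      Set.mem_compl_iff, Set.mem_singleton_iff, Fin.reduceEq, not_false_eq_true, not_true_eq_false,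
      Set.indicator_of_mem, Set.indicator_of_notMem, mul_zero, sub_zero, zero_sub] at this
    linear_combination this
  have he' := mul_right_cancel₀ (X_ne_zero 5) he
  obtain ⟨W, hW⟩ : X 4 ∣ e G := by
    refine (X_prime.dvd_or_dvd ⟨e H * C b, by rw [he']; ring⟩).resolve_right fun hdvd => ?_
    simpa [ha] using bind₁_indicator_compl_eq_zero_of_X_dvd (Set.mem_singleton 4) hdvd
  have hH : C b * e H = C a * X 1 * W := by
    refine mul_left_cancel₀ (X_ne_zero 4) ?_
    linear_combination -he' + C a * X 1 * hW
  have hF : C b * F = W * g a b + C b * G' * q₁ a b + C b * H' * q₂ a b := by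
    refine mul_left_cancel₀ (X_ne_zero 3) ?_
    linear_combination (-C b) * hGH - C b * q₁ a b * hG' - C b * q₂ a b * hH' + C b * q₁ a b * hW +
      q₂ a b * hH - W * X_three_mul_g (a := a) (b := b)
  rw [← Ideal.unit_mul_mem_iff_mem _ (hb.isUnit.map C), hF]
  refine add_mem (add_mem ?_ ?_) ?_ <;> exact Ideal.mul_mem_left _ _ (Ideal.subset_span (by simp))

theorem mul_g_mem_span_of_q₃_mul_mem (ha : a ≠ 0) {c : MvPolynomial (Fin 6) K}
    (h : q₃ a b * (c * g a b) ∈ Ideal.span {q₁ a b, q₂ a b}) :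
    c * g a b ∈ Ideal.span {q₁ a b, q₂ a b} := by
  obtain ⟨u, v, huv⟩ := Ideal.mem_span_pair.mp
    (by simpa [Set.image_pair] using sub_bind₁_indicator_compl_mem_span ({3, 5} : Set (Fin 6)) c)
  set e := bind₁ (R := K) (({3, 5} : Set (Fin 6))ᶜ.indicator (X : Fin 6 → MvPolynomial (Fin 6) K))
  have hec : e c = 0 := by
    obtain ⟨A, B, hAB⟩ := Ideal.mem_span_pair.mp h
    have hq₁ : e (q₁ a b) = 0 := by simp [e, q₁]
    have hq₂ : e (q₂ a b) = 0 := by simp [e, q₂]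
    have hq₃ : e (q₃ a b) = q₃ a b := by simp [e, q₃]
    have hg : e (g a b) = g a b := by simp [e, g]
    have := congrArg e hAB
    simp only [map_add, map_mul, hq₁, hq₂, hq₃, hg, mul_zero, add_zero] at this
    simpa [q₃_ne_zero ha, g_ne_zero ha] using this.symm
  rw [hec, sub_zero] at huv
  rw [← huv, add_mul, mul_assoc, mul_assoc, X_three_mul_g, X_five_mul_g]
  refine add_mem (Ideal.mul_mem_left _ _ (add_mem ?_ ?_)) (Ideal.mul_mem_left _ _ (add_mem ?_ ?_))
    <;> exact Ideal.mul_mem_left _ _ (Ideal.subset_span (by simp))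

theorem mem_span_q₁_q₂_of_X_three_mul_mem (ha : a ≠ 0) (hb : b ≠ 0) {F : MvPolynomial (Fin 6) K}
    (h₃ : X 3 * F ∈ Ideal.span {q₁ a b, q₂ a b}) (hq : q₃ a b * F ∈ Ideal.span {q₁ a b, q₂ a b}) :
    F ∈ Ideal.span {q₁ a b, q₂ a b} := by
  obtain ⟨c, z, hz, rfl⟩ := Ideal.mem_span_insert.mp (mem_span_g_q₁_q₂_of_X_three_mul_mem ha hb h₃)
  have hcg : q₃ a b * (c * g a b) ∈ Ideal.span {q₁ a b, q₂ a b} := by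
    simpa [mul_add] using sub_mem hq (Ideal.mul_mem_left _ (q₃ a b) hz)
  exact add_mem (mul_g_mem_span_of_q₃_mul_mem ha hcg) hz

def swapVars : Fin 6 → Fin 6 := ![1, 0, 4, 5, 2, 3]

theorem rename_swapVars_rename_swapVars (F : MvPolynomial (Fin 6) K) :
    rename swapVars (rename swapVars F) = F := by
  rw [rename_rename, show swapVars ∘ swapVars = id by decide, rename_id_apply]

theorem rename_swapVars_mem_span_q₁_q₂ {F : MvPolynomial (Fin 6) K}
    (h : F ∈ Ideal.span {q₁ a b, q₂ a b}) :
    rename swapVars F ∈ Ideal.span {q₁ a b, q₂ a b} := by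
  obtain ⟨u, v, rfl⟩ := Ideal.mem_span_pair.mp h
  have h₁ : rename swapVars (q₁ a b) = q₂ a b := by simp [q₁, q₂, swapVars]
  have h₂ : rename swapVars (q₂ a b) = q₁ a b := by simp [q₁, q₂, swapVars]
  rw [map_add, map_mul, map_mul, h₁, h₂, add_comm]
  exact Ideal.mem_span_pair.mpr ⟨_, _, rfl⟩

theorem mem_span_q₁_q₂_of_X_five_mul_mem (ha : a ≠ 0) (hb : b ≠ 0) {F : MvPolynomial (Fin 6) K}
    (h₅ : X 5 * F ∈ Ideal.span {q₁ a b, q₂ a b}) (hq : q₃ a b * F ∈ Ideal.span {q₁ a b, q₂ a b}) :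
    F ∈ Ideal.span {q₁ a b, q₂ a b} := by
  have h₃ : rename swapVars (q₃ a b) = q₃ a b := by
    simp only [q₃, swapVars, map_sub, map_mul, algHom_C, algebraMap_eq, rename_X, Matrix.cons_val]
    ring
  rw [← rename_swapVars_rename_swapVars F]
  refine rename_swapVars_mem_span_q₁_q₂ (mem_span_q₁_q₂_of_X_three_mul_mem ha hb ?_ ?_)
  · simpa [swapVars] using rename_swapVars_mem_span_q₁_q₂ h₅
  · simpa [h₃] using rename_swapVars_mem_span_q₁_q₂ hq

theorem exists_X_three_pow_mul_X_five_pow_mul_mem_span_q₁_q₂ (ha : a ≠ 0) (hab : a ^ 3 ≠ b ^ 3)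
    {F : MvPolynomial (Fin 6) K} (h : q₃ a b * F ∈ Ideal.span {q₁ a b, q₂ a b}) :
    ∃ n m, X 3 ^ n * (X 5 ^ m * F) ∈ Ideal.span {q₁ a b, q₂ a b} := by
  obtain ⟨n, m, G, hG, hFG⟩ := exists_pow_mul_pow_mul_sub_mem_span_q₁_q₂ a b F
  set ψ := (aeval (R := K) (genericPoint₂ a b)).toRingHom
  have hker : Ideal.span {q₁ a b, q₂ a b} ≤ RingHom.ker ψ := by
    rw [Ideal.span_le, Set.pair_subset_iff]
    exact ⟨aeval_genericPoint₂_q₁ ha, aeval_genericPoint₂_q₂ ha⟩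
  have hψq₃ : ψ (q₃ a b) ≠ 0 := by
    have : algebraMap K L ((a ^ 3 - b ^ 3) / a ^ 2) ≠ 0 :=
      (map_ne_zero _).mpr (div_ne_zero (sub_ne_zero.mpr hab) (pow_ne_zero 2 ha))
    change aeval _ _ ≠ 0
    rw [aeval_genericPoint₂_q₃ ha]
    exact mul_ne_zero (mul_ne_zero this (algebraMap_X_ne_zero 2)) (algebraMap_X_ne_zero 4)
  have hψF : ψ F = 0 := by
    have := hker h
    rw [RingHom.mem_ker, map_mul] at this
    exact (mul_eq_zero.mp this).resolve_left hψq₃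
  have hmF := Ideal.mem_of_sub_mem_of_map_eq_zero (IsFractionRing.injective _ L) hker
    (by rw [map_mul, map_mul, hψF, mul_zero, mul_zero])
    (aeval_eq_algebraMap_of_mem_supported genericPoint₂_eq hG) hFG
  have e : (C a * X 3) ^ n * ((C a * X 5) ^ m * F) =
      C (a ^ (n + m)) * (X 3 ^ n * (X 5 ^ m * F)) := by
    rw [pow_add, C_mul, map_pow, map_pow]; ring
  rw [e, Ideal.unit_mul_mem_iff_mem _ ((pow_ne_zero _ ha).isUnit.map C)] at hmF
  exact ⟨n, m, hmF⟩

theorem mem_span_q₁_q₂_of_q₃_mul_mem (ha : a ≠ 0) (hb : b ≠ 0) (hab : a ^ 3 ≠ b ^ 3)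
    {F : MvPolynomial (Fin 6) K} (h : q₃ a b * F ∈ Ideal.span {q₁ a b, q₂ a b}) :
    F ∈ Ideal.span {q₁ a b, q₂ a b} := by
  obtain ⟨n, m, hnm⟩ := exists_X_three_pow_mul_X_five_pow_mul_mem_span_q₁_q₂ ha hab h
  have h₅ := Ideal.mem_of_pow_mul_mem (fun _ => mem_span_q₁_q₂_of_X_three_mul_mem ha hb) n hnm
    (by simpa only [mul_left_comm] using Ideal.mul_mem_left _ (X 5 ^ m) h)
  exact Ideal.mem_of_pow_mul_mem (fun _ => mem_span_q₁_q₂_of_X_five_mul_mem ha hb) m h₅ h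

theorem isRegular_q₁_q₂_q₃ (ha : a ≠ 0) (hb : b ≠ 0) (hab : a ^ 3 ≠ b ^ 3) :
    RingTheory.Sequence.IsRegular (MvPolynomial (Fin 6) K) [q₁ a b, q₂ a b, q₃ a b] := by
  refine (RingTheory.Sequence.isRegular_self_iff _).mpr ⟨fun i hi x hx => ?_, ?_⟩
  · match i, hi with
    | 0, _ => simpa [q₁_ne_zero ha] using hx
    | 1, _ =>
      simpa [Ideal.ofList_singleton] using mem_span_q₁_of_q₂_mul_mem ha hb (by simpa using hx)
    | 2, _ =>
      simp only [List.take, Ideal.ofList_cons, Ideal.ofList_nil, List.getElem_cons_succ,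
        List.getElem_cons_zero, sup_bot_eq, ← Ideal.span_insert] at hx ⊢
      exact mem_span_q₁_q₂_of_q₃_mul_mem ha hb hab hx
  · refine ne_top_of_le_ne_top (RingHom.ker_ne_top (eval (0 : Fin 6 → K))) ?_
    rw [Ideal.ofList, Ideal.span_le]
    intro r hr
    simp only [List.mem_cons, List.not_mem_nil, or_false] at hr
    rcases hr with rfl | rfl | rfl <;> simp [q₁, q₂, q₃]

end ThreeQuadrics

theorem stmt16_general {K : Type*} [Field K]
    (c₁ c₂ : K) (hc : c₁*c₂*(c₁^6 - c₂^6) ≠ 0) :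
    (∃ z₂ z₃ z₄ z₅ z₇ z₉ : K,
      c₁^2*z₃*z₉ - c₂^2*z₄*z₅ = 0 ∧
      c₁^2*z₂*z₅ - c₂^2*z₇*z₉ = 0 ∧
      c₁^2*z₄*z₇ - c₂^2*z₂*z₃ = 0 ∧
      (!![(0:K), c₁^2*z₉, -(c₂^2*z₅), -(c₂^2*z₄), 0, c₁^2*z₃;
          c₁^2*z₅, 0, 0, c₁^2*z₂, -(c₂^2*z₉), -(c₂^2*z₇);
          -(c₂^2*z₃), -(c₂^2*z₂), c₁^2*z₇, 0, c₁^2*z₄, 0] :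
        Matrix (Fin 3) (Fin 6) K).rank = 3) ∧
    RingTheory.Sequence.IsRegular (MvPolynomial (Fin 6) K)
      ([C (c₁^2) * X 1 * X 5 - C (c₂^2) * X 2 * X 3,
        C (c₁^2) * X 0 * X 3 - C (c₂^2) * X 4 * X 5,
        C (c₁^2) * X 2 * X 4 - C (c₂^2) * X 0 * X 1] :
        List (MvPolynomial (Fin 6) K)) := by
  have h₁ : c₁ ≠ 0 := left_ne_zero_of_mul (left_ne_zero_of_mul hc)
  have h₂ : c₂ ≠ 0 := right_ne_zero_of_mul (left_ne_zero_of_mul hc)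
  have h₆ : c₁ ^ 6 - c₂ ^ 6 ≠ 0 := right_ne_zero_of_mul hc
  refine ⟨⟨0, c₂ ^ 2, c₁, c₁, 0, 1, by ring, by ring, by ring, ?_⟩,
    ThreeQuadrics.isRegular_q₁_q₂_q₃ (pow_ne_zero 2 h₁) (pow_ne_zero 2 h₂) ?_⟩
  · refine Matrix.rank_eq_card_of_det_submatrix_ne_zero _ ![1, 0, 4] ?_
    convert mul_ne_zero (pow_ne_zero 2 h₁) h₆ using 1
    simp only [Matrix.det_fin_three, Matrix.submatrix_apply, id_eq, Matrix.of_apply,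
      Matrix.cons_val', Matrix.cons_val_zero, Matrix.cons_val_one, Matrix.cons_val,
      Matrix.cons_val_fin_one]
    ring
  · rw [← pow_mul, ← pow_mul]
    exact fun h => h₆ (sub_eq_zero.mpr h)

/-- For `c₁c₂(c₁⁶−c₂⁶) ≠ 0` there is a common zero of the three quadrics
`q₁,q₂,q₃` at which their Jacobian matrix has rank 3; hence `q₁,q₂,q₃` is a regular
sequence in `K[z₂,z₃,z₄,z₅,z₇,z₉]`. -/
theorem stmt16 {K : Type*} [Field K] [IsAlgClosed K]
    (h2 : (2 : K) ≠ 0) (h3 : (3 : K) ≠ 0)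
    (c₁ c₂ : K) (hc : c₁*c₂*(c₁^6 - c₂^6) ≠ 0) :
    (∃ z₂ z₃ z₄ z₅ z₇ z₉ : K,
      c₁^2*z₃*z₉ - c₂^2*z₄*z₅ = 0 ∧
      c₁^2*z₂*z₅ - c₂^2*z₇*z₉ = 0 ∧
      c₁^2*z₄*z₇ - c₂^2*z₂*z₃ = 0 ∧
      (!![(0:K), c₁^2*z₉, -(c₂^2*z₅), -(c₂^2*z₄), 0, c₁^2*z₃;
          c₁^2*z₅, 0, 0, c₁^2*z₂, -(c₂^2*z₉), -(c₂^2*z₇);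
          -(c₂^2*z₃), -(c₂^2*z₂), c₁^2*z₇, 0, c₁^2*z₄, 0] :
        Matrix (Fin 3) (Fin 6) K).rank = 3) ∧
    RingTheory.Sequence.IsRegular (MvPolynomial (Fin 6) K)
      ([C (c₁^2) * X 1 * X 5 - C (c₂^2) * X 2 * X 3,
        C (c₁^2) * X 0 * X 3 - C (c₂^2) * X 4 * X 5,
        C (c₁^2) * X 2 * X 4 - C (c₂^2) * X 0 * X 1] :
        List (MvPolynomial (Fin 6) K)) :=
  stmt16_general c₁ c₂ hc
end

section
/- If z ∈ K⁹ has all coordinates that are cube roots of unity (z_i = ω^{e_i} for a fixed primitive cube root of unity ω), then the 5×9 matrix CS(z) has rank ≤ 2 (i.e., all 3×3 minors vanish) if and only if the exponents satisfy e₁+e₂+e₃ = e₄+e₅+e₆ = e₇+e₈+e₉ and e₁+e₄+e₇ = e₂+e₅+e₈ (mod 3); in particular, normalizing e₁ = 0, there are exactly 3⁵ = 243 such points. -/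
/-!
Put `f (a, b) = e_{3a+b}`, so that the nine exponents live on the affine plane `𝔽₃²`. Row `r` of
`CS` belongs to a direction `d_r` (`0` for the row of squares, then the four parallel classes of
lines), and its entry in column `p` is `z_{p+d_r} z_{p+2d_r}`. As `z_p³ = 1`, this is
`ω^{σ_r(p)} z_p⁻¹`, where `σ_r(p) = ∑ₜ f (p + t d_r)` is the exponent sum over the line, so `CS`
has the rank of `N = (ω^{σ_r(p)})`, whose row `0` consists of ones.

If every class has constant line sums, `N` has rank one. If two classes `r ≠ s` do not, three
points chosen on suitable lines give rows `0, r, s` a minor `[[1,1,1],[α,β,α],[x,x,y]]` with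
`α ≠ β`, `x ≠ y`, so the rank is at least three. Exactly one non-constant class is impossible:
the five lines through a point `p` cover the plane once and `p` six more times, so
`∑_r σ_r(p) = ∑ f` in `𝔽₃`. Finally, constancy of all four classes amounts to the three stated
congruences.
-/

open Matrix Function

section LineSum

variable (R : Type*) {V M : Type*} [Ring R] [Fintype R] [AddCommGroup V] [Module R V]
  [AddCommMonoid M]

def lineSum (f : V → M) (p d : V) : M := ∑ t : R, f (p + t • d)

variable {R}

lemma lineSum_add_smul (f : V → M) (p d : V) (s : R) :
    lineSum R f (p + s • d) d = lineSum R f p d := by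
  unfold lineSum
  simpa [add_smul, add_assoc] using Equiv.sum_comp (Equiv.addLeft s) (fun t => f (p + t • d))

lemma lineSum_eq_of_add_smul_eq {f : V → M} {x p d : V} {s : R} (h : x + s • d = p) :
    lineSum R f x d = lineSum R f p d := by
  rw [← h, lineSum_add_smul]

end LineSum

lemma ZMod.sum_univ_three {M : Type*} [AddCommMonoid M] (g : ZMod 3 → M) :
    ∑ t, g t = g 0 + g 1 + g 2 :=
  Fin.sum_univ_three g

lemma ZMod.forall_three {P : ZMod 3 → Prop} : (∀ a, P a) ↔ P 0 ∧ P 1 ∧ P 2 :=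
  ⟨fun h => ⟨h 0, h 1, h 2⟩, fun ⟨h0, h1, h2⟩ a => by fin_cases a <;> assumption⟩

lemma lineSum_zmod_three {V M : Type*} [AddCommGroup V] [Module (ZMod 3) V] [AddCommMonoid M]
    (f : V → M) (p d : V) :
    lineSum (ZMod 3) f p d = f p + f (p + d) + f (p + (2 : ZMod 3) • d) := by
  simp [lineSum, ZMod.sum_univ_three]

lemma Matrix.three_le_rank_of_pattern {m n K : Type*} [Field K] [Fintype n] (A : Matrix m n K)
    {i₀ i₁ i₂ : m} {j₁ j₂ j₃ : n} (h₀ : ∀ j, A i₀ j = 1) (h₁ : A i₁ j₃ = A i₁ j₁)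
    (h₂ : A i₂ j₂ = A i₂ j₁) (h₁' : A i₁ j₂ ≠ A i₁ j₁) (h₂' : A i₂ j₃ ≠ A i₂ j₁) :
    3 ≤ A.rank := by
  set B := A.submatrix ![i₀, i₁, i₂] ![j₁, j₂, j₃]
  have hdet : B.det = (A i₁ j₂ - A i₁ j₁) * (A i₂ j₃ - A i₂ j₁) := by
    rw [det_fin_three]
    simp only [B, submatrix_apply, cons_val_zero, cons_val_one, cons_val_two, head_cons,
      tail_cons, h₀, h₁, h₂]
    ring
  have hB : IsUnit B := (isUnit_iff_isUnit_det B).2 <| by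
    rw [hdet]
    exact (mul_ne_zero (sub_ne_zero.2 h₁') (sub_ne_zero.2 h₂')).isUnit
  calc 3 = B.rank := by rw [rank_of_isUnit B hB, Fintype.card_fin]
    _ ≤ A.rank := rank_submatrix_le A _ _

/-- `z_j` sits at the point `(j / 3, j % 3)` of `𝔽₃²`. -/
def csPoint : Fin 9 ≃ ZMod 3 × ZMod 3 := (finProdFinEquiv : Fin 3 × Fin 3 ≃ Fin 9).symm

/-- Row `r` of `CS(z)` multiplies the two other points of the line through a column in direction
`csDir r`; the row of squares is the degenerate direction `0`. -/
def csDir : Fin 5 → ZMod 3 × ZMod 3 := ![0, (0, 1), (1, 0), (1, 1), (1, 2)]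

section Plane

variable (f : ZMod 3 × ZMod 3 → ZMod 3)

def HasConstLineSums (d : ZMod 3 × ZMod 3) : Prop :=
  ∀ p, lineSum (ZMod 3) f p d = lineSum (ZMod 3) f 0 d

lemma lineSum_csDir_zero (p : ZMod 3 × ZMod 3) : lineSum (ZMod 3) f p (csDir 0) = 0 := by
  simp only [lineSum, csDir, cons_val_zero, smul_zero, add_zero, Finset.sum_const,
    Finset.card_univ, ZMod.card, nsmul_eq_mul]
  exact zero_mul _

lemma hasConstLineSums_csDir_zero : HasConstLineSums f (csDir 0) := fun p => by
  rw [lineSum_csDir_zero, lineSum_csDir_zero]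

lemma sum_lineSum_csDir (p : ZMod 3 × ZMod 3) :
    ∑ r, lineSum (ZMod 3) f p (csDir r) = ∑ x, f x := by
  rw [← Equiv.sum_comp (Equiv.addLeft p)]
  obtain ⟨a, b⟩ := p
  simp only [Fin.sum_univ_five, Fintype.sum_prod_type, ZMod.sum_univ_three, Equiv.coe_addLeft,
    csDir, lineSum_zmod_three, cons_val, cons_val_zero, cons_val_one, Prod.mk_add_mk,
    Prod.smul_mk, smul_eq_mul, add_zero, mul_zero, mul_one, smul_zero]
  reduce_mod_char
  grind

variable {f}

lemma hasConstLineSums_of_forall_ne {r : Fin 5}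
    (h : ∀ s, s ≠ r → HasConstLineSums f (csDir s)) : HasConstLineSums f (csDir r) := by
  intro p
  have hp := sum_lineSum_csDir f p
  have h0 := sum_lineSum_csDir f 0
  rw [← Finset.add_sum_erase _ _ (Finset.mem_univ r)] at hp h0
  rw [Finset.sum_congr rfl fun s hs => h s (Finset.ne_of_mem_erase hs) p] at hp
  linear_combination hp - h0

lemma exists_smul_add_smul_eq : ∀ r s : Fin 5, r ≠ 0 → s ≠ 0 → r ≠ s →
    ∀ v : ZMod 3 × ZMod 3, ∃ a b : ZMod 3, a • csDir r + b • csDir s = v := by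
  decide

lemma forall_hasConstLineSums_iff :
    (∀ r, HasConstLineSums f (csDir r)) ↔
      f (0, 0) + f (0, 1) + f (0, 2) = f (1, 0) + f (1, 1) + f (1, 2) ∧
      f (0, 0) + f (0, 1) + f (0, 2) = f (2, 0) + f (2, 1) + f (2, 2) ∧
      f (0, 0) + f (1, 0) + f (2, 0) = f (0, 1) + f (1, 1) + f (2, 1) := by
  constructor
  · intro h
    have h₁ := h 1 (1, 0)
    have h₂ := h 1 (2, 0)
    have h₃ := h 2 (0, 1)
    simp only [csDir, lineSum_zmod_three, cons_val, cons_val_zero, cons_val_one, Prod.mk_add_mk,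
      Prod.smul_mk, smul_eq_mul, add_zero, zero_add, mul_zero, mul_one] at h₁ h₂ h₃
    reduce_mod_char at h₁ h₂ h₃
    grind [Prod.mk_zero_zero]
  · rintro ⟨h₁, h₂, h₃⟩ r
    simp only [HasConstLineSums, Prod.forall, ZMod.forall_three]
    fin_cases r <;>
      simp only [Fin.zero_eta, Fin.mk_one, Fin.reduceFinMk, csDir, lineSum_zmod_three, cons_val,
        cons_val_zero, cons_val_one, Prod.mk_add_mk, Prod.smul_mk, smul_eq_mul, add_zero,
        zero_add, mul_zero, mul_one, smul_zero] <;>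
      reduce_mod_char <;> grind [Prod.mk_zero_zero]

end Plane

section LineSumMatrix

variable {K : Type*} [Field K] (φ : ZMod 3 → K)

def lineSumMatrix (f : ZMod 3 × ZMod 3 → ZMod 3) : Matrix (Fin 5) (Fin 9) K :=
  of fun r j => φ (lineSum (ZMod 3) f (csPoint j) (csDir r))

variable {φ} {f : ZMod 3 × ZMod 3 → ZMod 3}

lemma rank_lineSumMatrix_le_one (h : ∀ r, HasConstLineSums f (csDir r)) :
    (lineSumMatrix φ f).rank ≤ 1 := by
  have : lineSumMatrix φ f = vecMulVec (fun r => φ (lineSum (ZMod 3) f 0 (csDir r))) 1 := by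
    ext r j
    simp [lineSumMatrix, vecMulVec_apply, h r (csPoint j)]
  exact this ▸ rank_vecMulVec_le _ _

lemma three_le_rank_lineSumMatrix (hφ : Injective φ) (hφ0 : φ 0 = 1) {r s : Fin 5} (hrs : r ≠ s)
    (hr : ¬HasConstLineSums f (csDir r)) (hs : ¬HasConstLineSums f (csDir s)) :
    3 ≤ (lineSumMatrix φ f).rank := by
  have hr0 : r ≠ 0 := fun h => hr (h ▸ hasConstLineSums_csDir_zero f)
  have hs0 : s ≠ 0 := fun h => hs (h ▸ hasConstLineSums_csDir_zero f)
  simp only [HasConstLineSums, not_forall] at hr hs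
  obtain ⟨p, hp⟩ := hr
  obtain ⟨q, hq⟩ := hs
  obtain ⟨a, b, hab⟩ := exists_smul_add_smul_eq s r hs0 hr0 hrs.symm p
  obtain ⟨a', b', hab'⟩ := exists_smul_add_smul_eq r s hr0 hs0 hrs q
  have entry (i : Fin 5) (x : ZMod 3 × ZMod 3) :
      lineSumMatrix φ f i (csPoint.symm x) = φ (lineSum (ZMod 3) f x (csDir i)) := by
    simp [lineSumMatrix]
  -- columns: the origin, the meeting point of the `s`-line through `0` with the `r`-line
  -- through `p`, and that of the `r`-line through `0` with the `s`-line through `q`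
  refine (lineSumMatrix φ f).three_le_rank_of_pattern (i₀ := 0) (i₁ := r) (i₂ := s)
    (j₁ := csPoint.symm 0) (j₂ := csPoint.symm (a • csDir s))
    (j₃ := csPoint.symm (a' • csDir r)) (fun j => ?_) ?_ ?_ ?_ ?_
  · simp [lineSumMatrix, lineSum_csDir_zero, hφ0]
  · rw [entry, entry, ← lineSum_eq_of_add_smul_eq (zero_add _)]
  · rw [entry, entry, ← lineSum_eq_of_add_smul_eq (zero_add _)]
  · rw [entry, entry, lineSum_eq_of_add_smul_eq hab]
    exact hφ.ne hp
  · rw [entry, entry, lineSum_eq_of_add_smul_eq hab']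
    exact hφ.ne hq

lemma rank_lineSumMatrix_le_two_iff (hφ : Injective φ) (hφ0 : φ 0 = 1) :
    (lineSumMatrix φ f).rank ≤ 2 ↔ ∀ r, HasConstLineSums f (csDir r) := by
  refine ⟨fun hrank => ?_, fun h => (rank_lineSumMatrix_le_one h).trans one_le_two⟩
  by_contra hnot
  obtain ⟨r, hr⟩ := not_forall.1 hnot
  obtain ⟨s, hsr, hs⟩ : ∃ s, s ≠ r ∧ ¬HasConstLineSums f (csDir s) := by
    by_contra! h
    exact hr (hasConstLineSums_of_forall_ne h)
  have := three_le_rank_lineSumMatrix hφ hφ0 hsr hs hr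
  omega

end LineSumMatrix

def csMatrix {R : Type*} [CommMonoid R] (z : Fin 9 → R) : Matrix (Fin 5) (Fin 9) R :=
  !![(z 0)^2, (z 1)^2, (z 2)^2, (z 3)^2, (z 4)^2, (z 5)^2, (z 6)^2, (z 7)^2, (z 8)^2;
     z 1*z 2, z 0*z 2, z 0*z 1, z 4*z 5, z 3*z 5, z 3*z 4, z 7*z 8, z 6*z 8, z 6*z 7;
     z 3*z 6, z 4*z 7, z 5*z 8, z 0*z 6, z 1*z 7, z 2*z 8, z 0*z 3, z 1*z 4, z 2*z 5;
     z 4*z 8, z 5*z 6, z 3*z 7, z 2*z 7, z 0*z 8, z 1*z 6, z 1*z 5, z 2*z 3, z 0*z 4;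
     z 5*z 7, z 3*z 8, z 4*z 6, z 1*z 8, z 2*z 6, z 0*z 7, z 2*z 4, z 0*z 5, z 1*z 3]

lemma csMatrix_apply {R : Type*} [CommMonoid R] (z : Fin 9 → R) (r : Fin 5) (j : Fin 9) :
    csMatrix z r j = z (csPoint.symm (csPoint j + csDir r)) *
      z (csPoint.symm (csPoint j + (2 : ZMod 3) • csDir r)) := by
  fin_cases r <;> fin_cases j <;> first | rfl | exact mul_comm _ _ | exact sq _

lemma csMatrix_addChar {R : Type*} [CommRing R] (ψ : AddChar (ZMod 3) R) (e : Fin 9 → ZMod 3) :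
    csMatrix (ψ ∘ e) = lineSumMatrix ψ (e ∘ csPoint.symm) * diagonal (fun j => ψ (-e j)) := by
  ext r j
  rw [mul_diagonal, csMatrix_apply, lineSumMatrix, of_apply, lineSum_zmod_three]
  simp only [Function.comp_apply, Equiv.symm_apply_apply, ← AddChar.map_add_eq_mul]
  congr 1
  ring

lemma card_normalized_solutions :
    Fintype.card {e : Fin 9 → ZMod 3 //
      e 0 = 0 ∧ e 0 + e 1 + e 2 = e 3 + e 4 + e 5 ∧ e 0 + e 1 + e 2 = e 6 + e 7 + e 8 ∧
      e 0 + e 3 + e 6 = e 1 + e 4 + e 7} = 243 := by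
  let sol : (Fin 5 → ZMod 3) → Fin 9 → ZMod 3 := fun v =>
    ![0, v 0, v 1, v 2, v 3, v 0 + v 1 - v 2 - v 3, v 4, v 2 + v 4 - v 0 - v 3,
      2 * v 0 + v 1 - v 2 + v 3 - 2 * v 4]
  refine (Fintype.card_congr (β := Fin 5 → ZMod 3) ?_).trans (by simp)
  exact
    { toFun := fun e => ![e.1 1, e.1 2, e.1 3, e.1 4, e.1 6]
      invFun := fun v => ⟨sol v, by simp only [sol, cons_val, cons_val_zero, cons_val_one]; grind⟩
      left_inv := by
        rintro ⟨e, h0, h1, h2, h3⟩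
        ext i
        fin_cases i <;>
          simp only [Fin.zero_eta, Fin.mk_one, Fin.reduceFinMk, sol, cons_val, cons_val_zero,
            cons_val_one] <;>
          grind
      right_inv := fun v => by
        ext i
        fin_cases i <;> rfl }

theorem stmt17_general {K : Type*} [Field K] (ω : K)
    (hω : IsPrimitiveRoot ω 3) :
    (∀ e : Fin 9 → ZMod 3,
      let w : Fin 9 → K := fun i => ω ^ (e i).val
      let CS : Matrix (Fin 5) (Fin 9) K :=
        !![(w 0)^2, (w 1)^2, (w 2)^2, (w 3)^2, (w 4)^2, (w 5)^2, (w 6)^2, (w 7)^2, (w 8)^2;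
           w 1*w 2, w 0*w 2, w 0*w 1, w 4*w 5, w 3*w 5, w 3*w 4, w 7*w 8, w 6*w 8, w 6*w 7;
           w 3*w 6, w 4*w 7, w 5*w 8, w 0*w 6, w 1*w 7, w 2*w 8, w 0*w 3, w 1*w 4, w 2*w 5;
           w 4*w 8, w 5*w 6, w 3*w 7, w 2*w 7, w 0*w 8, w 1*w 6, w 1*w 5, w 2*w 3, w 0*w 4;
           w 5*w 7, w 3*w 8, w 4*w 6, w 1*w 8, w 2*w 6, w 0*w 7, w 2*w 4, w 0*w 5, w 1*w 3]
      (CS.rank ≤ 2 ↔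
        (e 0 + e 1 + e 2 = e 3 + e 4 + e 5 ∧ e 0 + e 1 + e 2 = e 6 + e 7 + e 8 ∧
         e 0 + e 3 + e 6 = e 1 + e 4 + e 7))) ∧
    Fintype.card {e : Fin 9 → ZMod 3 //
      e 0 = 0 ∧ e 0 + e 1 + e 2 = e 3 + e 4 + e 5 ∧ e 0 + e 1 + e 2 = e 6 + e 7 + e 8 ∧
      e 0 + e 3 + e 6 = e 1 + e 4 + e 7} = 243 := by
  refine ⟨fun e => ?_, card_normalized_solutions⟩
  let ψ := AddChar.zmodChar 3 hω.pow_eq_one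
  have hψ : Injective ψ := fun a b h =>
    ZMod.val_injective 3 (hω.pow_inj (ZMod.val_lt a) (ZMod.val_lt b) h)
  have hdiag : IsUnit (diagonal fun j => ψ (-e j)).det :=
    (isUnit_iff_isUnit_det _).1 (isUnit_diagonal.2 (Pi.isUnit_iff.2 fun _ => ψ.val_isUnit _))
  show (csMatrix (ψ ∘ e)).rank ≤ 2 ↔ _
  rw [csMatrix_addChar, rank_mul_eq_left_of_isUnit_det _ _ hdiag,
    rank_lineSumMatrix_le_two_iff hψ ψ.map_zero_eq_one, forall_hasConstLineSums_iff]
  exact Iff.rfl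

/-- If all coordinates of `z` are cube roots of unity, `z_i = ω^{e_i}`, then `CS(z)` has
rank ≤ 2 iff `e₁+e₂+e₃ = e₄+e₅+e₆ = e₇+e₈+e₉` and `e₁+e₄+e₇ = e₂+e₅+e₈` in `ℤ/3`; and,
normalizing `e₁ = 0`, there are exactly `3⁵ = 243` such exponent vectors. -/
theorem stmt17 {K : Type*} [Field K] (h3 : (3 : K) ≠ 0) (ω : K)
    (hω : IsPrimitiveRoot ω 3) :
    (∀ e : Fin 9 → ZMod 3,
      let w : Fin 9 → K := fun i => ω ^ (e i).val
      let CS : Matrix (Fin 5) (Fin 9) K :=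
        !![(w 0)^2, (w 1)^2, (w 2)^2, (w 3)^2, (w 4)^2, (w 5)^2, (w 6)^2, (w 7)^2, (w 8)^2;
           w 1*w 2, w 0*w 2, w 0*w 1, w 4*w 5, w 3*w 5, w 3*w 4, w 7*w 8, w 6*w 8, w 6*w 7;
           w 3*w 6, w 4*w 7, w 5*w 8, w 0*w 6, w 1*w 7, w 2*w 8, w 0*w 3, w 1*w 4, w 2*w 5;
           w 4*w 8, w 5*w 6, w 3*w 7, w 2*w 7, w 0*w 8, w 1*w 6, w 1*w 5, w 2*w 3, w 0*w 4;
           w 5*w 7, w 3*w 8, w 4*w 6, w 1*w 8, w 2*w 6, w 0*w 7, w 2*w 4, w 0*w 5, w 1*w 3]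
      (CS.rank ≤ 2 ↔
        (e 0 + e 1 + e 2 = e 3 + e 4 + e 5 ∧ e 0 + e 1 + e 2 = e 6 + e 7 + e 8 ∧
         e 0 + e 3 + e 6 = e 1 + e 4 + e 7))) ∧
    Fintype.card {e : Fin 9 → ZMod 3 //
      e 0 = 0 ∧ e 0 + e 1 + e 2 = e 3 + e 4 + e 5 ∧ e 0 + e 1 + e 2 = e 6 + e 7 + e 8 ∧
      e 0 + e 3 + e 6 = e 1 + e 4 + e 7} = 243 :=
  stmt17_general ω hω
end
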